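/- arXiv:math/0502126 — 5 statements merged into one kernel-verified Lean document; each statement's English description precedes it below -/
import Mathlib

section
/- Let s, δ, ψ₁, ψ₂, f₁, f₂ be complex numbers, let a₁, a₂, b₁, b₂ : ℕ → ℂ, let T₁, T₂ > 0 be reals, and let E₁, E₂ : ℝ → ℂ be functions such that for every real x > 0 one has f₁ = ∑_{n ≤ x} a₁(n) n^{−s} + ψ₁ ∑_{n ≤ T₁/x} b₁(n) n^{s−δ} + E₁(x) and f₂ = ∑_{n ≤ x} a₂(n) n^{−s} + ψ₂ ∑_{n ≤ T₂/x} b₂(n) n^{s−δ} + E₂(x) (all sums over positive integers n, empty when the range contains none). Set A(n) = ∑_{uv=n} a₁(u)a₂(v) and B(n) = ∑_{uv=n} b₁(u)b₂(v). Then for all x₁, x₂ > 0, writing y₁ = T₁/x₁, y₂ = T₂/x₂, ℓ₁ = x₁/y₂, ℓ₂ = x₂/y₁, one has f₁f₂ = ∑_{n ≤ x₁x₂} A(n) n^{−s} + ψ₁ψ₂ ∑_{n ≤ y₁y₂} B(n) n^{s−δ} + ∑_{n ≤ x₁} a₁(n) n^{−s} E₂(x₁x₂/n) + ∑_{n ≤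 x₂} a₂(n) n^{−s} E₁(x₁x₂/n) + ψ₁ ∑_{m ≤ y₁} b₁(m) m^{s−δ} E₂(m x₂/y₁) + ψ₂ ∑_{m ≤ y₂} b₂(m) m^{s−δ} E₁(m x₁/y₂) + E₁(x₁)E₂(x₂) + L₁ + L₂, where L₁ = ψ₁ ℓ₂^{−s} ∑_{m ≤ y₁} b₁(m) ã₂(ℓ₂ m) m^{−δ} and L₂ = ψ₂ ℓ₁^{−s} ∑_{n ≤ y₂} b₂(n) ã₁(ℓ₁ n) n^{−δ}, with ãᵢ(u) = aᵢ(u) when u is a positive integer and ãᵢ(u) = 0 otherwise. -/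
open Finset


section Aux

lemma aux_sum_indic {K : ℕ} {t : ℝ} (hK : ⌊t⌋₊ ≤ K) (h : ℕ → ℂ) :
    ∑ n ∈ Icc 1 ⌊t⌋₊, h n = ∑ n ∈ Icc 1 K, if (n : ℝ) ≤ t then h n else 0 := by
  rw [← Finset.sum_filter]
  apply Finset.sum_congr _ (fun _ _ => rfl)
  ext n
  simp only [mem_filter, mem_Icc]
  constructor
  · rintro ⟨h1, h2⟩
    have ht0 : (1:ℕ) ≤ ⌊t⌋₊ := le_trans h1 h2
    have ht : 0 ≤ t := by
      by_contra hc
      push_neg at hc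
      simp [Nat.floor_eq_zero.2 (lt_of_lt_of_le hc zero_le_one)] at ht0
    exact ⟨⟨h1, le_trans h2 hK⟩, le_trans (by exact_mod_cast h2) (Nat.floor_le ht)⟩
  · rintro ⟨⟨h1, _⟩, h3⟩
    exact ⟨h1, Nat.le_floor h3⟩

lemma aux_sum_eq_real {K : ℕ} {r : ℝ} (hK : ⌊r⌋₊ ≤ K) (h : ℕ → ℂ) :
    ∑ u ∈ Icc 1 K, (if (u : ℝ) = r then h u else 0)
      = if 1 ≤ ⌊r⌋₊ ∧ (⌊r⌋₊ : ℝ) = r then h ⌊r⌋₊ else 0 := by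
  have step : ∀ u ∈ Icc 1 K, (if (u : ℝ) = r then h u else 0)
      = if u = ⌊r⌋₊ then (if 1 ≤ ⌊r⌋₊ ∧ (⌊r⌋₊ : ℝ) = r then h ⌊r⌋₊ else 0) else 0 := by
    intro u hu
    rw [mem_Icc] at hu
    by_cases he : (u : ℝ) = r
    · have hfl : ⌊r⌋₊ = u := by rw [← he, Nat.floor_natCast]
      rw [if_pos he, if_pos hfl.symm, if_pos ⟨hfl ▸ hu.1, by rw [hfl, he]⟩, hfl]
    · rw [if_neg he]
      by_cases hu2 : u = ⌊r⌋₊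
      · rw [if_pos hu2]
        have : ¬(1 ≤ ⌊r⌋₊ ∧ (⌊r⌋₊ : ℝ) = r) := by
          rintro ⟨_, h2⟩; exact he (by rw [hu2]; exact h2)
        rw [if_neg this]
      · rw [if_neg hu2]
  rw [Finset.sum_congr rfl step, Finset.sum_ite_eq' (Icc 1 K) ⌊r⌋₊]
  by_cases hc : 1 ≤ ⌊r⌋₊ ∧ (⌊r⌋₊ : ℝ) = r
  · rw [if_pos (mem_Icc.2 ⟨hc.1, hK⟩)]
  · rw [if_neg hc, ite_self]

lemma aux_sum_if_and {K : ℕ} (A : Prop) (B : ℕ → Prop) [Decidable A]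
    [∀ v, Decidable (B v)] (c : ℂ) (d : ℕ → ℂ) :
    ∑ v ∈ Icc 1 K, (if A ∧ B v then c * d v else 0)
      = if A then c * ∑ v ∈ Icc 1 K, (if B v then d v else 0) else 0 := by
  by_cases hA : A
  · rw [if_pos hA, Finset.mul_sum]
    exact Finset.sum_congr rfl fun v _ => by by_cases hB : B v <;> simp [hA, hB]
  · rw [if_neg hA]
    exact Finset.sum_eq_zero fun v _ => by simp [hA]

lemma aux_prod_ind {K : ℕ} (P Q : ℕ → Prop) [∀ u, Decidable (P u)] [∀ v, Decidable (Q v)]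
    (c d : ℕ → ℂ) :
    ∑ u ∈ Icc 1 K, ∑ v ∈ Icc 1 K, (if P u ∧ Q v then c u * d v else 0)
      = (∑ u ∈ Icc 1 K, if P u then c u else 0) * (∑ v ∈ Icc 1 K, if Q v then d v else 0) := by
  rw [Finset.sum_mul_sum]
  exact Finset.sum_congr rfl fun u _ => Finset.sum_congr rfl fun v _ => by
    by_cases hP : P u <;> by_cases hQ : Q v <;> simp [hP, hQ]

lemma aux_hyp_pt {x₁ x₂ : ℝ} (hx₁ : 0 < x₁) (hx₂ : 0 < x₂) {u v : ℝ} (hu : 1 ≤ u) (hv : 1 ≤ v)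
    (c : ℂ) :
    (if u * v ≤ x₁ * x₂ then c else 0)
      = (if u ≤ x₁ ∧ v ≤ x₁ * x₂ / u then c else 0)
        + (if v ≤ x₂ ∧ u ≤ x₁ * x₂ / v then c else 0)
        - (if u ≤ x₁ ∧ v ≤ x₂ then c else 0) := by
  have hu0 : (0:ℝ) < u := lt_of_lt_of_le zero_lt_one hu
  have hv0 : (0:ℝ) < v := lt_of_lt_of_le zero_lt_one hv
  have e1 : v ≤ x₁ * x₂ / u ↔ u * v ≤ x₁ * x₂ := by
    rw [le_div_iff₀ hu0]; constructor <;> intro h <;> nlinarith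
  have e2 : u ≤ x₁ * x₂ / v ↔ u * v ≤ x₁ * x₂ := by
    rw [le_div_iff₀ hv0, mul_comm]
  simp only [e1, e2]
  by_cases h1 : u ≤ x₁
  · by_cases h2 : v ≤ x₂
    · have h3 : u * v ≤ x₁ * x₂ := mul_le_mul h1 h2 hv0.le hx₁.le
      simp only [h1, h2, h3, true_and, and_true, if_true]; ring
    · by_cases h3 : u * v ≤ x₁ * x₂ <;>
        simp only [h1, h2, h3, true_and, false_and, and_true, and_false, if_true, if_false] <;>
        ring
  · by_cases h2 : v ≤ x₂
    · by_cases h3 : u * v ≤ x₁ * x₂ <;>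
        simp only [h1, h2, h3, true_and, false_and, and_true, and_false, if_true, if_false] <;>
        ring
    · have h3 : ¬ u * v ≤ x₁ * x₂ := by nlinarith [not_le.1 h1, not_le.1 h2]
      simp only [h1, h2, h3, false_and, and_false, if_false]; ring

lemma aux_pt3 (u L X : ℝ) (c : ℂ) :
    (if u ≤ X ∧ L ≤ u then c else 0) + (if L ≤ X ∧ u ≤ L then c else 0)
      - (if u ≤ X ∧ L ≤ X then c else 0) = if L ≤ X ∧ u = L then c else 0 := by
  rcases le_or_gt L X with h2 | h2
  · rcases lt_trichotomy u L with h | h | h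
    · rw [if_neg (by rintro ⟨_, h3⟩; linarith), if_pos ⟨h2, h.le⟩,
        if_pos ⟨le_trans h.le h2, h2⟩, if_neg (by rintro ⟨_, he⟩; linarith)]
      ring
    · subst h
      simp only [h2, le_refl, and_self, true_and, and_true, if_true]
      ring
    · by_cases hux : u ≤ X <;>
        simp only [hux, h.le, h.ne', not_le.2 h, h2, true_and, false_and, and_true, and_false,
          if_true, if_false, if_neg (by rintro ⟨_, he⟩; exact h.ne' he : ¬(L ≤ X ∧ u = L))] <;>
        ring
  · rw [if_neg (by rintro ⟨ha, hb⟩; linarith), if_neg (by rintro ⟨ha, _⟩; linarith),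
      if_neg (by rintro ⟨_, hb⟩; linarith), if_neg (by rintro ⟨ha, _⟩; linarith)]
    ring

lemma aux_collapse {K : ℕ} {t : ℝ} (hK : ⌊t⌋₊ ≤ K) (g : ℕ → ℕ → ℂ) :
    ∑ n ∈ Icc 1 ⌊t⌋₊, ∑ p ∈ n.divisorsAntidiagonal, g p.1 p.2
      = ∑ u ∈ Icc 1 K, ∑ v ∈ Icc 1 K, if (u : ℝ) * v ≤ t then g u v else 0 := by
  rw [aux_sum_indic hK]
  have step1 : ∀ n ∈ Icc 1 K,
      (if (n : ℝ) ≤ t then ∑ p ∈ n.divisorsAntidiagonal, g p.1 p.2 else 0)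
        = ∑ u ∈ Icc 1 K, ∑ v ∈ Icc 1 K, if u * v = n ∧ (n : ℝ) ≤ t then g u v else 0 := by
    intro n hn
    rw [mem_Icc] at hn
    by_cases hc : (n : ℝ) ≤ t
    · rw [if_pos hc]
      have e : ∑ u ∈ Icc 1 K, ∑ v ∈ Icc 1 K, (if u * v = n ∧ (n:ℝ) ≤ t then g u v else 0)
          = ∑ p ∈ (Icc 1 K ×ˢ Icc 1 K).filter (fun p => p.1 * p.2 = n), g p.1 p.2 := by
        rw [Finset.sum_filter, ← Finset.sum_product']
        exact Finset.sum_congr rfl fun p _ => by by_cases h : p.1 * p.2 = n <;> simp [h, hc]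
      rw [e]
      apply Finset.sum_congr _ (fun _ _ => rfl)
      ext p
      simp only [mem_filter, mem_product, mem_Icc, Nat.mem_divisorsAntidiagonal]
      constructor
      · rintro ⟨h1, _⟩
        have hp1 : 1 ≤ p.1 := by
          rcases Nat.eq_zero_or_pos p.1 with h | h
          · exfalso; rw [h, zero_mul] at h1; omega
          · exact h
        have hp2 : 1 ≤ p.2 := by
          rcases Nat.eq_zero_or_pos p.2 with h | h
          · exfalso; rw [h, mul_zero] at h1; omega
          · exact h
        refine ⟨⟨⟨hp1, ?_⟩, hp2, ?_⟩, h1⟩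
        · calc p.1 ≤ p.1 * p.2 := Nat.le_mul_of_pos_right _ hp2
            _ = n := h1
            _ ≤ K := hn.2
        · calc p.2 ≤ p.1 * p.2 := Nat.le_mul_of_pos_left _ hp1
            _ = n := h1
            _ ≤ K := hn.2
      · rintro ⟨_, h2⟩; exact ⟨h2, by omega⟩
    · rw [if_neg hc]
      symm
      refine Finset.sum_eq_zero fun u _ => Finset.sum_eq_zero fun v _ => ?_
      rw [if_neg (by rintro ⟨_, h⟩; exact hc h)]
  rw [Finset.sum_congr rfl step1, Finset.sum_comm]
  refine Finset.sum_congr rfl fun u hu => ?_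
  rw [Finset.sum_comm]
  refine Finset.sum_congr rfl fun v hv => ?_
  rw [mem_Icc] at hu hv
  have step2 : ∀ n ∈ Icc 1 K, (if u * v = n ∧ (n:ℝ) ≤ t then g u v else 0)
      = if n = u * v then (if ((u * v : ℕ):ℝ) ≤ t then g u v else 0) else 0 := by
    intro n _
    by_cases h : u * v = n
    · subst h; simp
    · rw [if_neg (by rintro ⟨h1, _⟩; exact h h1), if_neg (fun hh => h hh.symm)]
  rw [Finset.sum_congr rfl step2, Finset.sum_ite_eq' (Icc 1 K) (u * v)]
  have hcast : ((u * v : ℕ) : ℝ) = (u : ℝ) * v := by push_cast; ring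
  by_cases hle : ((u * v : ℕ) : ℝ) ≤ t
  · have hmem : u * v ∈ Icc 1 K := by
      rw [mem_Icc]
      exact ⟨Nat.one_le_iff_ne_zero.2 (Nat.mul_ne_zero (by omega) (by omega)),
        le_trans (Nat.le_floor hle) hK⟩
    rw [if_pos hmem, if_pos hle, if_pos (hcast ▸ hle)]
  · have e0 : (if u * v ∈ Icc 1 K then (if ((u * v : ℕ):ℝ) ≤ t then g u v else 0) else 0) = 0 := by
      split_ifs <;> simp_all
    rw [e0, if_neg (fun hh => hle (hcast ▸ hh))]

lemma patI {K : ℕ} (F ψ : ℂ) (α β : ℕ → ℂ) (Ecal : ℝ → ℂ) (τ : ℝ)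
    (hAFE : ∀ x : ℝ, 0 < x →
      F = (∑ n ∈ Icc 1 ⌊x⌋₊, α n) + ψ * (∑ n ∈ Icc 1 ⌊τ / x⌋₊, β n) + Ecal x)
    (X : ℝ) (c : ℕ → ℂ) (t : ℕ → ℝ)
    (ht : ∀ u : ℕ, 1 ≤ u → (u : ℝ) ≤ X → 0 < t u ∧ ⌊t u⌋₊ ≤ K ∧ ⌊τ / t u⌋₊ ≤ K) :
    ∑ u ∈ Icc 1 K, ∑ v ∈ Icc 1 K, (if (u : ℝ) ≤ X ∧ (v : ℝ) ≤ t u then c u * α v else 0)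
      = (∑ u ∈ Icc 1 K, if (u : ℝ) ≤ X then c u else 0) * F
        - ψ * ∑ u ∈ Icc 1 K, ∑ k ∈ Icc 1 K,
            (if (u : ℝ) ≤ X ∧ (k : ℝ) ≤ τ / t u then c u * β k else 0)
        - ∑ u ∈ Icc 1 K, (if (u : ℝ) ≤ X then c u * Ecal (t u) else 0) := by
  have main : ∀ u ∈ Icc 1 K,
      (∑ v ∈ Icc 1 K, if (u:ℝ) ≤ X ∧ (v:ℝ) ≤ t u then c u * α v else 0)
        = (if (u:ℝ) ≤ X then c u else 0) * F
          - ψ * (∑ k ∈ Icc 1 K, if (u:ℝ) ≤ X ∧ (k:ℝ) ≤ τ / t u then c u * β k else 0)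
          - (if (u:ℝ) ≤ X then c u * Ecal (t u) else 0) := by
    intro u hu
    rw [mem_Icc] at hu
    rw [aux_sum_if_and, aux_sum_if_and]
    by_cases hX : (u:ℝ) ≤ X
    · obtain ⟨hpos, hK1, hK2⟩ := ht u hu.1 hX
      simp only [hX, if_true]
      have hα : (∑ v ∈ Icc 1 K, if (v:ℝ) ≤ t u then α v else 0)
          = F - ψ * (∑ k ∈ Icc 1 K, if (k:ℝ) ≤ τ / t u then β k else 0) - Ecal (t u) := by
        rw [← aux_sum_indic hK1 α, ← aux_sum_indic hK2 β]
        linear_combination - hAFE (t u) hpos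
      rw [hα]; ring
    · simp only [hX, if_false]; ring
  rw [Finset.sum_congr rfl main, Finset.sum_sub_distrib, Finset.sum_sub_distrib,
    ← Finset.sum_mul, ← Finset.mul_sum]

lemma patII {K : ℕ} (F ψ : ℂ) (α β : ℕ → ℂ) (Ecal : ℝ → ℂ) (τ : ℝ)
    (hAFE : ∀ x : ℝ, 0 < x →
      F = (∑ n ∈ Icc 1 ⌊x⌋₊, α n) + ψ * (∑ n ∈ Icc 1 ⌊τ / x⌋₊, β n) + Ecal x)
    (Y : ℝ) (c : ℕ → ℂ) (r : ℕ → ℝ)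
    (hr : ∀ m : ℕ, 1 ≤ m → (m : ℝ) ≤ Y → 0 < r m ∧ ⌊r m⌋₊ ≤ K ∧ ⌊τ / r m⌋₊ ≤ K) :
    ψ * ∑ m ∈ Icc 1 K, ∑ k ∈ Icc 1 K,
        (if (m : ℝ) ≤ Y ∧ (k : ℝ) ≤ τ / r m then c m * β k else 0)
      = (∑ m ∈ Icc 1 K, if (m : ℝ) ≤ Y then c m else 0) * F
        - ∑ m ∈ Icc 1 K, ∑ v ∈ Icc 1 K,
            (if (m : ℝ) ≤ Y ∧ (v : ℝ) ≤ r m then c m * α v else 0)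
        - ∑ m ∈ Icc 1 K, (if (m : ℝ) ≤ Y then c m * Ecal (r m) else 0) := by
  rw [Finset.mul_sum]
  have main : ∀ m ∈ Icc 1 K,
      ψ * (∑ k ∈ Icc 1 K, if (m:ℝ) ≤ Y ∧ (k:ℝ) ≤ τ / r m then c m * β k else 0)
        = (if (m:ℝ) ≤ Y then c m else 0) * F
          - (∑ v ∈ Icc 1 K, if (m:ℝ) ≤ Y ∧ (v:ℝ) ≤ r m then c m * α v else 0)
          - (if (m:ℝ) ≤ Y then c m * Ecal (r m) else 0) := by
    intro m hm
    rw [mem_Icc] at hm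
    rw [aux_sum_if_and, aux_sum_if_and]
    by_cases hY : (m:ℝ) ≤ Y
    · obtain ⟨hpos, hK1, hK2⟩ := hr m hm.1 hY
      simp only [hY, if_true]
      have hβ : ψ * (∑ k ∈ Icc 1 K, if (k:ℝ) ≤ τ / r m then β k else 0)
          = F - (∑ v ∈ Icc 1 K, if (v:ℝ) ≤ r m then α v else 0) - Ecal (r m) := by
        rw [← aux_sum_indic hK2 β, ← aux_sum_indic hK1 α]
        linear_combination - hAFE (r m) hpos
      linear_combination (c m) * hβ
    · simp only [hY, if_false]; ring
  rw [Finset.sum_congr rfl main, Finset.sum_sub_distrib, Finset.sum_sub_distrib,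
    ← Finset.sum_mul]

lemma aux_cast_split (p : ℕ × ℕ) (n : ℕ) (hpn : p.1 * p.2 = n) (e : ℂ) :
    ((n : ℕ) : ℂ) ^ e = (p.1 : ℂ) ^ e * (p.2 : ℂ) ^ e := by
  subst hpn
  rw [show ((p.1 * p.2 : ℕ) : ℂ) = (((p.1 : ℕ) : ℝ) : ℂ) * (((p.2 : ℕ) : ℝ) : ℂ) by
      push_cast; ring,
    Complex.mul_cpow_ofReal_nonneg (Nat.cast_nonneg _) (Nat.cast_nonneg _)]
  norm_cast

lemma harg_a (T x y m : ℝ) (hx : x ≠ 0) (hy : y ≠ 0) (hm : m ≠ 0) :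
    y * (T / x) / m = T / (m * x / y) := by field_simp

lemma harg_b (T x y k : ℝ) (hx : x ≠ 0) (hy : y ≠ 0) (hk : k ≠ 0) :
    T / x * y / k = T / (k * x / y) := by field_simp

lemma harg_c (T xa xb u : ℝ) (ha : xa ≠ 0) (hb : xb ≠ 0) (hu : u ≠ 0) :
    T / (xa * xb / u) = T / xb * u / xa := by field_simp

lemma harg_d (T xa xb u : ℝ) (ha : xa ≠ 0) (hb : xb ≠ 0) (hu : u ≠ 0) :
    T / (xa * xb / u) = T / xa * u / xb := by field_simp

end Aux

/-- `tilde a u = a u` when `u` is a positive integer, and `0` otherwise. -/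
noncomputable def tilde (a : ℕ → ℂ) (u : ℝ) : ℂ :=
  if 1 ≤ ⌊u⌋₊ ∧ (⌊u⌋₊ : ℝ) = u then a ⌊u⌋₊ else 0

set_option maxHeartbeats 1000000 in
/-- AFE for the product of two functions given AFEs of the factors (Theorem 1). -/
theorem afe_product
    (s δ ψ₁ ψ₂ f₁ f₂ : ℂ) (a₁ a₂ b₁ b₂ : ℕ → ℂ) (T₁ T₂ : ℝ)
    (hT₁ : 0 < T₁) (hT₂ : 0 < T₂) (E₁ E₂ : ℝ → ℂ)
    (hf₁ : ∀ x : ℝ, 0 < x →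
      f₁ = ∑ n ∈ Icc 1 ⌊x⌋₊, a₁ n * (n : ℂ) ^ (-s)
        + ψ₁ * ∑ n ∈ Icc 1 ⌊T₁ / x⌋₊, b₁ n * (n : ℂ) ^ (s - δ) + E₁ x)
    (hf₂ : ∀ x : ℝ, 0 < x →
      f₂ = ∑ n ∈ Icc 1 ⌊x⌋₊, a₂ n * (n : ℂ) ^ (-s)
        + ψ₂ * ∑ n ∈ Icc 1 ⌊T₂ / x⌋₊, b₂ n * (n : ℂ) ^ (s - δ) + E₂ x)
    (x₁ x₂ : ℝ) (hx₁ : 0 < x₁) (hx₂ : 0 < x₂)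
    (y₁ y₂ ℓ₁ ℓ₂ : ℝ)
    (hy₁ : y₁ = T₁ / x₁) (hy₂ : y₂ = T₂ / x₂)
    (hℓ₁ : ℓ₁ = x₁ / y₂) (hℓ₂ : ℓ₂ = x₂ / y₁) :
    f₁ * f₂ =
      ∑ n ∈ Icc 1 ⌊x₁ * x₂⌋₊,
        (∑ p ∈ Nat.divisorsAntidiagonal n, a₁ p.1 * a₂ p.2) * (n : ℂ) ^ (-s)
      + ψ₁ * ψ₂ * ∑ n ∈ Icc 1 ⌊y₁ * y₂⌋₊,
          (∑ p ∈ Nat.divisorsAntidiagonal n, b₁ p.1 * b₂ p.2) * (n : ℂ) ^ (s - δ)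
      + ∑ n ∈ Icc 1 ⌊x₁⌋₊, a₁ n * (n : ℂ) ^ (-s) * E₂ (x₁ * x₂ / n)
      + ∑ n ∈ Icc 1 ⌊x₂⌋₊, a₂ n * (n : ℂ) ^ (-s) * E₁ (x₁ * x₂ / n)
      + ψ₁ * ∑ m ∈ Icc 1 ⌊y₁⌋₊, b₁ m * (m : ℂ) ^ (s - δ) * E₂ (m * x₂ / y₁)
      + ψ₂ * ∑ m ∈ Icc 1 ⌊y₂⌋₊, b₂ m * (m : ℂ) ^ (s - δ) * E₁ (m * x₁ / y₂)
      + E₁ x₁ * E₂ x₂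
      + ψ₁ * (ℓ₂ : ℂ) ^ (-s) * ∑ m ∈ Icc 1 ⌊y₁⌋₊,
          b₁ m * tilde a₂ (ℓ₂ * m) * (m : ℂ) ^ (-δ)
      + ψ₂ * (ℓ₁ : ℂ) ^ (-s) * ∑ n ∈ Icc 1 ⌊y₂⌋₊,
          b₂ n * tilde a₁ (ℓ₁ * n) * (n : ℂ) ^ (-δ) := by
  have hy₁0 : 0 < y₁ := by rw [hy₁]; positivity
  have hy₂0 : 0 < y₂ := by rw [hy₂]; positivity
  have hℓ₁0 : 0 < ℓ₁ := by rw [hℓ₁]; positivity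
  have hℓ₂0 : 0 < ℓ₂ := by rw [hℓ₂]; positivity
  set K := ⌊x₁ * x₂⌋₊ + ⌊y₁ * y₂⌋₊ + ⌊x₁⌋₊ + ⌊x₂⌋₊ + ⌊y₁⌋₊ + ⌊y₂⌋₊ with hKdef
  have hKxx : ⌊x₁ * x₂⌋₊ ≤ K := by omega
  have hKyy : ⌊y₁ * y₂⌋₊ ≤ K := by omega
  have hKx₁ : ⌊x₁⌋₊ ≤ K := by omega
  have hKx₂ : ⌊x₂⌋₊ ≤ K := by omega
  have hKy₁ : ⌊y₁⌋₊ ≤ K := by omega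
  have hKy₂ : ⌊y₂⌋₊ ≤ K := by omega
  have hG1 : (∑ n ∈ Icc 1 ⌊x₁ * x₂⌋₊, (∑ p ∈ Nat.divisorsAntidiagonal n, a₁ p.1 * a₂ p.2) * (n : ℂ) ^ (-s)) = ∑ u ∈ Icc 1 K, ∑ v ∈ Icc 1 K, (if (u : ℝ) * (v : ℝ) ≤ x₁ * x₂ then a₁ u * (u : ℂ) ^ (-s) * (a₂ v * (v : ℂ) ^ (-s)) else 0) := by
    have h2 : (∑ n ∈ Icc 1 ⌊x₁ * x₂⌋₊, ∑ p ∈ Nat.divisorsAntidiagonal n,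
        (a₁ p.1 * (p.1 : ℂ) ^ (-s) * (a₂ p.2 * (p.2 : ℂ) ^ (-s))))
        = ∑ u ∈ Icc 1 K, ∑ v ∈ Icc 1 K, (if (u : ℝ) * (v : ℝ) ≤ x₁ * x₂ then a₁ u * (u : ℂ) ^ (-s) * (a₂ v * (v : ℂ) ^ (-s)) else 0) := aux_collapse hKxx (fun u v => a₁ u * (u : ℂ) ^ (-s) * (a₂ v * (v : ℂ) ^ (-s)))
    refine Eq.trans ?_ h2
    refine Finset.sum_congr rfl fun n hn => ?_
    rw [Finset.sum_mul]
    refine Finset.sum_congr rfl fun p hp => ?_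
    rw [aux_cast_split p n (Nat.mem_divisorsAntidiagonal.mp hp).1 (-s)]
    ring
  have hHyp1 : ∑ u ∈ Icc 1 K, ∑ v ∈ Icc 1 K, (if (u : ℝ) * (v : ℝ) ≤ x₁ * x₂ then a₁ u * (u : ℂ) ^ (-s) * (a₂ v * (v : ℂ) ^ (-s)) else 0) = (∑ u ∈ Icc 1 K, ∑ v ∈ Icc 1 K, (if (u : ℝ) ≤ x₁ ∧ (v : ℝ) ≤ x₁ * x₂ / (u : ℝ) then a₁ u * (u : ℂ) ^ (-s) * (a₂ v * (v : ℂ) ^ (-s)) else 0)) + (∑ u ∈ Icc 1 K, ∑ v ∈ Icc 1 K, (if (v : ℝ) ≤ x₂ ∧ (u : ℝ) ≤ x₁ * x₂ / (v : ℝ) then a₁ u * (u : ℂ) ^ (-s) * (a₂ v * (v : ℂ) ^ (-s)) else 0)) - (∑ u ∈ Icc 1 K, ∑ v ∈ Icc 1 K, (if (u : ℝ) ≤ x₁ ∧ (v : ℝ) ≤ x₂ then a₁ u * (u : ℂ) ^ (-s) * (a₂ v * (v : ℂ) ^ (-s)) else 0)) := by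
    have hmid : ∑ u ∈ Icc 1 K, ∑ v ∈ Icc 1 K, (if (u : ℝ) * (v : ℝ) ≤ x₁ * x₂ then a₁ u * (u : ℂ) ^ (-s) * (a₂ v * (v : ℂ) ^ (-s)) else 0) = ∑ u ∈ Icc 1 K, ∑ v ∈ Icc 1 K, ((if (u : ℝ) ≤ x₁ ∧ (v : ℝ) ≤ x₁ * x₂ / (u : ℝ) then a₁ u * (u : ℂ) ^ (-s) * (a₂ v * (v : ℂ) ^ (-s)) else 0) + (if (v : ℝ) ≤ x₂ ∧ (u : ℝ) ≤ x₁ * x₂ / (v : ℝ) then a₁ u * (u : ℂ) ^ (-s) * (a₂ v * (v : ℂ) ^ (-s)) else 0) - (if (u : ℝ) ≤ x₁ ∧ (v : ℝ) ≤ x₂ then a₁ u * (u : ℂ) ^ (-s) * (a₂ v * (v : ℂ) ^ (-s)) else 0)) := by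
      refine Finset.sum_congr rfl fun u hu => Finset.sum_congr rfl fun v hv => ?_
      have hu1 : (1 : ℝ) ≤ (u : ℝ) := by exact_mod_cast (mem_Icc.1 hu).1
      have hv1 : (1 : ℝ) ≤ (v : ℝ) := by exact_mod_cast (mem_Icc.1 hv).1
      exact aux_hyp_pt hx₁ hx₂ hu1 hv1 _
    rw [hmid]
    simp only [Finset.sum_add_distrib, Finset.sum_sub_distrib]
  have hS1 : (∑ u ∈ Icc 1 K, ∑ v ∈ Icc 1 K, (if (u : ℝ) ≤ x₁ ∧ (v : ℝ) ≤ x₁ * x₂ / (u : ℝ) then a₁ u * (u : ℂ) ^ (-s) * (a₂ v * (v : ℂ) ^ (-s)) else 0)) = (∑ u ∈ Icc 1 K, (if (u : ℝ) ≤ x₁ then a₁ u * (u : ℂ) ^ (-s) else 0)) * f₂ - ψ₂ * (∑ u ∈ Icc 1 K, ∑ k ∈ Icc 1 K, (if (u : ℝ) ≤ x₁ ∧ (k : ℝ) ≤ T₂ / (x₁ * x₂ / (u : ℝ)) then a₁ u * (u : ℂ) ^ (-s) * (b₂ k * (k : ℂ) ^ (s - δ)) else 0)) - (∑ u ∈ Icc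 1 K, (if (u : ℝ) ≤ x₁ then a₁ u * (u : ℂ) ^ (-s) * E₂ (x₁ * x₂ / (u : ℝ)) else 0)) := by
    refine patI f₂ ψ₂ (fun n => a₂ n * (n : ℂ) ^ (-s)) (fun n => b₂ n * (n : ℂ) ^ (s - δ))
      E₂ T₂ hf₂ x₁ (fun u => a₁ u * (u : ℂ) ^ (-s)) (fun u => x₁ * x₂ / (u : ℝ)) ?_
    intro u hu hux
    have hu1 : (1 : ℝ) ≤ (u : ℝ) := by exact_mod_cast hu
    have hu0 : (0 : ℝ) < (u : ℝ) := by linarith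
    refine ⟨by positivity, ?_, ?_⟩
    · exact le_trans (Nat.floor_mono (div_le_self (by positivity) hu1)) hKxx
    · have h2 : x₂ ≤ x₁ * x₂ / (u : ℝ) := by rw [le_div_iff₀ hu0]; nlinarith
      have h3 : T₂ / (x₁ * x₂ / (u : ℝ)) ≤ y₂ := by
        rw [hy₂, div_le_div_iff₀ (by positivity) hx₂]
        nlinarith [hT₂.le]
      exact le_trans (Nat.floor_mono h3) hKy₂
  have hS2 : (∑ u ∈ Icc 1 K, ∑ v ∈ Icc 1 K, (if (v : ℝ) ≤ x₂ ∧ (u : ℝ) ≤ x₁ * x₂ / (v : ℝ) then a₁ u * (u : ℂ) ^ (-s) * (a₂ v * (v : ℂ) ^ (-s)) else 0)) = (∑ v ∈ Icc 1 K, (if (v : ℝ) ≤ x₂ then a₂ v * (v : ℂ) ^ (-s) else 0)) * f₁ - ψ₁ * (∑ v ∈ Icc 1 K, ∑ m ∈ Icc 1 K, (if (v : ℝ) ≤ x₂ ∧ (m : ℝ) ≤ T₁ / (x₁ * x₂ / (v : ℝ)) then a₂ v * (v : ℂ) ^ (-s) * (b₁ m * (m : ℂ) ^ (s - δ)) else 0))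 - (∑ v ∈ Icc 1 K, (if (v : ℝ) ≤ x₂ then a₂ v * (v : ℂ) ^ (-s) * E₁ (x₁ * x₂ / (v : ℝ)) else 0)) := by
    have hcomm : ∑ u ∈ Icc 1 K, ∑ v ∈ Icc 1 K, (if (v : ℝ) ≤ x₂ ∧ (u : ℝ) ≤ x₁ * x₂ / (v : ℝ) then a₁ u * (u : ℂ) ^ (-s) * (a₂ v * (v : ℂ) ^ (-s)) else 0) = (∑ v ∈ Icc 1 K, ∑ u ∈ Icc 1 K, (if (v : ℝ) ≤ x₂ ∧ (u : ℝ) ≤ x₁ * x₂ / (v : ℝ) then a₂ v * (v : ℂ) ^ (-s) * (a₁ u * (u : ℂ) ^ (-s)) else 0)) := by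
      conv_lhs => rw [Finset.sum_comm]
      exact Finset.sum_congr rfl fun v _ => Finset.sum_congr rfl fun u _ => by
        split_ifs <;> ring
    rw [hcomm]
    refine patI f₁ ψ₁ (fun n => a₁ n * (n : ℂ) ^ (-s)) (fun n => b₁ n * (n : ℂ) ^ (s - δ))
      E₁ T₁ hf₁ x₂ (fun v => a₂ v * (v : ℂ) ^ (-s)) (fun v => x₁ * x₂ / (v : ℝ)) ?_
    intro v hv hvx
    have hv1 : (1 : ℝ) ≤ (v : ℝ) := by exact_mod_cast hv
    have hv0 : (0 : ℝ) < (v : ℝ) := by linarith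
    refine ⟨by positivity, ?_, ?_⟩
    · exact le_trans (Nat.floor_mono (div_le_self (by positivity) hv1)) hKxx
    · have h2 : x₁ ≤ x₁ * x₂ / (v : ℝ) := by rw [le_div_iff₀ hv0]; nlinarith
      have h3 : T₁ / (x₁ * x₂ / (v : ℝ)) ≤ y₁ := by
        rw [hy₁, div_le_div_iff₀ (by positivity) hx₁]
        nlinarith [hT₁.le]
      exact le_trans (Nat.floor_mono h3) hKy₁
  have hS3 : (∑ u ∈ Icc 1 K, ∑ v ∈ Icc 1 K, (if (u : ℝ) ≤ x₁ ∧ (v : ℝ) ≤ x₂ then a₁ u * (u : ℂ) ^ (-s) * (a₂ v * (v : ℂ) ^ (-s)) else 0)) = (∑ u ∈ Icc 1 K, (if (u : ℝ) ≤ x₁ then a₁ u * (u : ℂ) ^ (-s) else 0)) * (∑ v ∈ Icc 1 K, (if (v : ℝ) ≤ x₂ then a₂ v * (v : ℂ) ^ (-s) else 0)) := by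
    exact aux_prod_ind (fun u => (u : ℝ) ≤ x₁) (fun v => (v : ℝ) ≤ x₂) (fun u => a₁ u * (u : ℂ) ^ (-s)) (fun v => a₂ v * (v : ℂ) ^ (-s))
  have hG2 : (∑ n ∈ Icc 1 ⌊y₁ * y₂⌋₊, (∑ p ∈ Nat.divisorsAntidiagonal n, b₁ p.1 * b₂ p.2) * (n : ℂ) ^ (s - δ)) = ∑ m ∈ Icc 1 K, ∑ k ∈ Icc 1 K, (if (m : ℝ) * (k : ℝ) ≤ y₁ * y₂ then b₁ m * (m : ℂ) ^ (s - δ) * (b₂ k * (k : ℂ) ^ (s - δ)) else 0) := by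
    have h2 : (∑ n ∈ Icc 1 ⌊y₁ * y₂⌋₊, ∑ p ∈ Nat.divisorsAntidiagonal n,
        (b₁ p.1 * (p.1 : ℂ) ^ (s - δ) * (b₂ p.2 * (p.2 : ℂ) ^ (s - δ))))
        = ∑ m ∈ Icc 1 K, ∑ k ∈ Icc 1 K, (if (m : ℝ) * (k : ℝ) ≤ y₁ * y₂ then b₁ m * (m : ℂ) ^ (s - δ) * (b₂ k * (k : ℂ) ^ (s - δ)) else 0) := aux_collapse hKyy (fun m k => b₁ m * (m : ℂ) ^ (s - δ) * (b₂ k * (k : ℂ) ^ (s - δ)))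
    refine Eq.trans ?_ h2
    refine Finset.sum_congr rfl fun n hn => ?_
    rw [Finset.sum_mul]
    refine Finset.sum_congr rfl fun p hp => ?_
    rw [aux_cast_split p n (Nat.mem_divisorsAntidiagonal.mp hp).1 (s - δ)]
    ring
  have hHyp2 : ∑ m ∈ Icc 1 K, ∑ k ∈ Icc 1 K, (if (m : ℝ) * (k : ℝ) ≤ y₁ * y₂ then b₁ m * (m : ℂ) ^ (s - δ) * (b₂ k * (k : ℂ) ^ (s - δ)) else 0) = (∑ m ∈ Icc 1 K, ∑ k ∈ Icc 1 K, (if (m : ℝ) ≤ y₁ ∧ (k : ℝ) ≤ y₁ * y₂ / (m : ℝ) then b₁ m * (m : ℂ) ^ (s - δ) * (b₂ k * (k : ℂ) ^ (s - δ)) else 0)) + (∑ m ∈ Icc 1 K, ∑ k ∈ Icc 1 K, (if (k : ℝ) ≤ y₂ ∧ (m : ℝ) ≤ y₁ * y₂ / (k : ℝ) then b₁ m * (m : ℂ) ^ (s - δ) * (b₂ k * (k : ℂ) ^ (s - δ)) else 0)) - (∑ m ∈ Icc 1 K, ∑ k ∈ Icc 1 K, (if (m : ℝ) ≤ y₁ ∧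 (k : ℝ) ≤ y₂ then b₁ m * (m : ℂ) ^ (s - δ) * (b₂ k * (k : ℂ) ^ (s - δ)) else 0)) := by
    have hmid : ∑ m ∈ Icc 1 K, ∑ k ∈ Icc 1 K, (if (m : ℝ) * (k : ℝ) ≤ y₁ * y₂ then b₁ m * (m : ℂ) ^ (s - δ) * (b₂ k * (k : ℂ) ^ (s - δ)) else 0) = ∑ m ∈ Icc 1 K, ∑ k ∈ Icc 1 K, ((if (m : ℝ) ≤ y₁ ∧ (k : ℝ) ≤ y₁ * y₂ / (m : ℝ) then b₁ m * (m : ℂ) ^ (s - δ) * (b₂ k * (k : ℂ) ^ (s - δ)) else 0) + (if (k : ℝ) ≤ y₂ ∧ (m : ℝ) ≤ y₁ * y₂ / (k : ℝ) then b₁ m * (m : ℂ) ^ (s - δ) * (b₂ k * (k : ℂ) ^ (s - δ)) else 0) - (if (m : ℝ) ≤ y₁ ∧ (k : ℝ) ≤ y₂ then b₁ m * (m : ℂ) ^ (s - δ) * (b₂ k * (k : ℂ) ^ (s - δ)) else 0)) := by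
      refine Finset.sum_congr rfl fun m hm => Finset.sum_congr rfl fun k hk => ?_
      have hm1 : (1 : ℝ) ≤ (m : ℝ) := by exact_mod_cast (mem_Icc.1 hm).1
      have hk1 : (1 : ℝ) ≤ (k : ℝ) := by exact_mod_cast (mem_Icc.1 hk).1
      exact aux_hyp_pt hy₁0 hy₂0 hm1 hk1 _
    rw [hmid]
    simp only [Finset.sum_add_distrib, Finset.sum_sub_distrib]
  have hT1s : ψ₂ * (∑ m ∈ Icc 1 K, ∑ k ∈ Icc 1 K, (if (m : ℝ) ≤ y₁ ∧ (k : ℝ) ≤ y₁ * y₂ / (m : ℝ) then b₁ m * (m : ℂ) ^ (s - δ) * (b₂ k * (k : ℂ) ^ (s - δ)) else 0)) = (∑ m ∈ Icc 1 K, (if (m : ℝ) ≤ y₁ then b₁ m * (m : ℂ) ^ (s - δ) else 0)) * f₂ - (∑ m ∈ Icc 1 K, ∑ v ∈ Icc 1 K, (if (m : ℝ) ≤ y₁ ∧ (v : ℝ) ≤ (m : ℝ) * x₂ / y₁ then b₁ m * (m : ℂ) ^ (s - δ) * (a₂ v * (v : ℂ) ^ (-s)) else 0)) - (∑ m ∈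 Icc 1 K, (if (m : ℝ) ≤ y₁ then b₁ m * (m : ℂ) ^ (s - δ) * E₂ ((m : ℝ) * x₂ / y₁) else 0)) := by
    have hcond : ∑ m ∈ Icc 1 K, ∑ k ∈ Icc 1 K, (if (m : ℝ) ≤ y₁ ∧ (k : ℝ) ≤ y₁ * y₂ / (m : ℝ) then b₁ m * (m : ℂ) ^ (s - δ) * (b₂ k * (k : ℂ) ^ (s - δ)) else 0) = (∑ m ∈ Icc 1 K, ∑ k ∈ Icc 1 K, (if (m : ℝ) ≤ y₁ ∧ (k : ℝ) ≤ T₂ / ((m : ℝ) * x₂ / y₁) then b₁ m * (m : ℂ) ^ (s - δ) * (b₂ k * (k : ℂ) ^ (s - δ)) else 0)) := by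
      refine Finset.sum_congr rfl fun m hm => Finset.sum_congr rfl fun k _ => ?_
      have hm0 : ((m : ℝ)) ≠ 0 := Nat.cast_ne_zero.mpr (by have := (mem_Icc.1 hm).1; omega)
      have harg : y₁ * y₂ / (m : ℝ) = T₂ / ((m : ℝ) * x₂ / y₁) := by
        rw [hy₂]; exact harg_a T₂ x₂ y₁ _ hx₂.ne' hy₁0.ne' hm0
      rw [harg]
    rw [hcond]
    refine patII f₂ ψ₂ (fun n => a₂ n * (n : ℂ) ^ (-s)) (fun n => b₂ n * (n : ℂ) ^ (s - δ))
      E₂ T₂ hf₂ y₁ (fun m => b₁ m * (m : ℂ) ^ (s - δ)) (fun m => (m : ℝ) * x₂ / y₁) ?_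
    intro m hm hmy
    have hm1 : (1 : ℝ) ≤ (m : ℝ) := by exact_mod_cast hm
    have hm0 : (0 : ℝ) < (m : ℝ) := by linarith
    refine ⟨by positivity, ?_, ?_⟩
    · have h2 : (m : ℝ) * x₂ / y₁ ≤ x₂ := by rw [div_le_iff₀ hy₁0]; nlinarith
      exact le_trans (Nat.floor_mono h2) hKx₂
    · have harg : T₂ / ((m : ℝ) * x₂ / y₁) = y₁ * y₂ / (m : ℝ) := by
        rw [hy₂]; exact (harg_a T₂ x₂ y₁ _ hx₂.ne' hy₁0.ne' hm0.ne').symm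
      have h3 : T₂ / ((m : ℝ) * x₂ / y₁) ≤ y₁ * y₂ := by
        rw [harg]; exact div_le_self (by positivity) hm1
      exact le_trans (Nat.floor_mono h3) hKyy
  have hT2s : ψ₁ * (∑ m ∈ Icc 1 K, ∑ k ∈ Icc 1 K, (if (k : ℝ) ≤ y₂ ∧ (m : ℝ) ≤ y₁ * y₂ / (k : ℝ) then b₁ m * (m : ℂ) ^ (s - δ) * (b₂ k * (k : ℂ) ^ (s - δ)) else 0)) = (∑ k ∈ Icc 1 K, (if (k : ℝ) ≤ y₂ then b₂ k * (k : ℂ) ^ (s - δ) else 0)) * f₁ - (∑ k ∈ Icc 1 K, ∑ u ∈ Icc 1 K, (if (k : ℝ) ≤ y₂ ∧ (u : ℝ) ≤ (k : ℝ) * x₁ / y₂ then b₂ k * (k : ℂ) ^ (s - δ) * (a₁ u * (u : ℂ) ^ (-s)) else 0)) - (∑ k ∈ Icc 1 K, (if (k : ℝ) ≤ y₂ then b₂ k * (k : ℂ) ^ (s - δ) * E₁ ((k : ℝ) * x₁ / y₂) else 0)) := by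
    have hcond : ∑ m ∈ Icc 1 K, ∑ k ∈ Icc 1 K, (if (k : ℝ) ≤ y₂ ∧ (m : ℝ) ≤ y₁ * y₂ / (k : ℝ) then b₁ m * (m : ℂ) ^ (s - δ) * (b₂ k * (k : ℂ) ^ (s - δ)) else 0) = (∑ k ∈ Icc 1 K, ∑ m ∈ Icc 1 K, (if (k : ℝ) ≤ y₂ ∧ (m : ℝ) ≤ T₁ / ((k : ℝ) * x₁ / y₂) then b₂ k * (k : ℂ) ^ (s - δ) * (b₁ m * (m : ℂ) ^ (s - δ)) else 0)) := by
      conv_lhs => rw [Finset.sum_comm]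
      refine Finset.sum_congr rfl fun k hk => Finset.sum_congr rfl fun m _ => ?_
      have hk0 : ((k : ℝ)) ≠ 0 := Nat.cast_ne_zero.mpr (by have := (mem_Icc.1 hk).1; omega)
      have harg : y₁ * y₂ / (k : ℝ) = T₁ / ((k : ℝ) * x₁ / y₂) := by
        rw [hy₁]; exact harg_b T₁ x₁ y₂ _ hx₁.ne' hy₂0.ne' hk0
      rw [harg]
      exact if_congr Iff.rfl (by ring) rfl
    rw [hcond]
    refine patII f₁ ψ₁ (fun n => a₁ n * (n : ℂ) ^ (-s)) (fun n => b₁ n * (n : ℂ) ^ (s - δ))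
      E₁ T₁ hf₁ y₂ (fun k => b₂ k * (k : ℂ) ^ (s - δ)) (fun k => (k : ℝ) * x₁ / y₂) ?_
    intro k hk hky
    have hk1 : (1 : ℝ) ≤ (k : ℝ) := by exact_mod_cast hk
    have hk0 : (0 : ℝ) < (k : ℝ) := by linarith
    refine ⟨by positivity, ?_, ?_⟩
    · have h2 : (k : ℝ) * x₁ / y₂ ≤ x₁ := by rw [div_le_iff₀ hy₂0]; nlinarith
      exact le_trans (Nat.floor_mono h2) hKx₁
    · have harg : T₁ / ((k : ℝ) * x₁ / y₂) = y₁ * y₂ / (k : ℝ) := by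
        rw [hy₁]; exact (harg_b T₁ x₁ y₂ _ hx₁.ne' hy₂0.ne' hk0.ne').symm
      have h3 : T₁ / ((k : ℝ) * x₁ / y₂) ≤ y₁ * y₂ := by
        rw [harg]; exact div_le_self (by positivity) hk1
      exact le_trans (Nat.floor_mono h3) hKyy
  have hT3s : (∑ m ∈ Icc 1 K, ∑ k ∈ Icc 1 K, (if (m : ℝ) ≤ y₁ ∧ (k : ℝ) ≤ y₂ then b₁ m * (m : ℂ) ^ (s - δ) * (b₂ k * (k : ℂ) ^ (s - δ)) else 0)) = (∑ m ∈ Icc 1 K, (if (m : ℝ) ≤ y₁ then b₁ m * (m : ℂ) ^ (s - δ) else 0)) * (∑ k ∈ Icc 1 K, (if (k : ℝ) ≤ y₂ then b₂ k * (k : ℂ) ^ (s - δ) else 0)) := by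
    exact aux_prod_ind (fun m => (m : ℝ) ≤ y₁) (fun k => (k : ℝ) ≤ y₂) (fun m => b₁ m * (m : ℂ) ^ (s - δ)) (fun k => b₂ k * (k : ℂ) ^ (s - δ))
  have hE3 : (∑ u ∈ Icc 1 K, (if (u : ℝ) ≤ x₁ then a₁ u * (u : ℂ) ^ (-s) * E₂ (x₁ * x₂ / (u : ℝ)) else 0)) = (∑ n ∈ Icc 1 ⌊x₁⌋₊, a₁ n * (n : ℂ) ^ (-s) * E₂ (x₁ * x₂ / n)) := by
    exact (aux_sum_indic hKx₁ (fun n => a₁ n * (n : ℂ) ^ (-s) * E₂ (x₁ * x₂ / (n : ℝ)))).symm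
  have hE4 : (∑ v ∈ Icc 1 K, (if (v : ℝ) ≤ x₂ then a₂ v * (v : ℂ) ^ (-s) * E₁ (x₁ * x₂ / (v : ℝ)) else 0)) = (∑ n ∈ Icc 1 ⌊x₂⌋₊, a₂ n * (n : ℂ) ^ (-s) * E₁ (x₁ * x₂ / n)) := by
    exact (aux_sum_indic hKx₂ (fun n => a₂ n * (n : ℂ) ^ (-s) * E₁ (x₁ * x₂ / (n : ℝ)))).symm
  have hE5 : (∑ m ∈ Icc 1 K, (if (m : ℝ) ≤ y₁ then b₁ m * (m : ℂ) ^ (s - δ) * E₂ ((m : ℝ) * x₂ / y₁) else 0)) = (∑ m ∈ Icc 1 ⌊y₁⌋₊, b₁ m * (m : ℂ) ^ (s - δ) * E₂ (m * x₂ / y₁)) := by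
    exact (aux_sum_indic hKy₁ (fun m => b₁ m * (m : ℂ) ^ (s - δ) * E₂ ((m : ℝ) * x₂ / y₁))).symm
  have hE6 : (∑ k ∈ Icc 1 K, (if (k : ℝ) ≤ y₂ then b₂ k * (k : ℂ) ^ (s - δ) * E₁ ((k : ℝ) * x₁ / y₂) else 0)) = (∑ m ∈ Icc 1 ⌊y₂⌋₊, b₂ m * (m : ℂ) ^ (s - δ) * E₁ (m * x₁ / y₂)) := by
    exact (aux_sum_indic hKy₂ (fun m => b₂ m * (m : ℂ) ^ (s - δ) * E₁ ((m : ℝ) * x₁ / y₂))).symm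
  have hk3 : (∑ u ∈ Icc 1 K, ∑ k ∈ Icc 1 K, (if (u : ℝ) ≤ x₁ ∧ (k : ℝ) ≤ T₂ / (x₁ * x₂ / (u : ℝ)) then a₁ u * (u : ℂ) ^ (-s) * (b₂ k * (k : ℂ) ^ (s - δ)) else 0)) + (∑ k ∈ Icc 1 K, ∑ u ∈ Icc 1 K, (if (k : ℝ) ≤ y₂ ∧ (u : ℝ) ≤ (k : ℝ) * x₁ / y₂ then b₂ k * (k : ℂ) ^ (s - δ) * (a₁ u * (u : ℂ) ^ (-s)) else 0)) = (∑ k ∈ Icc 1 K, (if (k : ℝ) ≤ y₂ then b₂ k * (k : ℂ) ^ (s - δ) else 0)) * (∑ u ∈ Icc 1 K, (if (u : ℝ) ≤ x₁ then a₁ u * (u : ℂ) ^ (-s) else 0)) + (ℓ₁ : ℂ) ^ (-s) * (∑ n ∈ Icc 1 ⌊y₂⌋₊, b₂ n * tilde a₁ (ℓ₁ * n) * (n : ℂ) ^ (-δ)) := by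
    have hky : ∀ k : ℕ, ((k : ℝ) ≤ y₂ ↔ ℓ₁ * (k : ℝ) ≤ x₁) := by
      intro k
      rw [hℓ₁, div_mul_eq_mul_div, div_le_iff₀ hy₂0]
      constructor <;> intro h <;> nlinarith
    have hP : (∑ u ∈ Icc 1 K, ∑ k ∈ Icc 1 K, (if (u : ℝ) ≤ x₁ ∧ (k : ℝ) ≤ T₂ / (x₁ * x₂ / (u : ℝ)) then a₁ u * (u : ℂ) ^ (-s) * (b₂ k * (k : ℂ) ^ (s - δ)) else 0)) = (∑ k ∈ Icc 1 K, ∑ u ∈ Icc 1 K, (if (u : ℝ) ≤ x₁ ∧ ℓ₁ * (k : ℝ) ≤ (u : ℝ) then b₂ k * (k : ℂ) ^ (s - δ) * (a₁ u * (u : ℂ) ^ (-s)) else 0)) := by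
      conv_lhs => rw [Finset.sum_comm]
      refine Finset.sum_congr rfl fun k _ => Finset.sum_congr rfl fun u hu => ?_
      have hu1 : (1 : ℝ) ≤ (u : ℝ) := by exact_mod_cast (mem_Icc.1 hu).1
      have hu0 : (0 : ℝ) < (u : ℝ) := by linarith
      have harg : T₂ / (x₁ * x₂ / (u : ℝ)) = y₂ * (u : ℝ) / x₁ := by
        rw [hy₂, harg_c T₂ x₁ x₂ _ hx₁.ne' hx₂.ne' hu0.ne']
      have hiffc : ((k : ℝ) ≤ T₂ / (x₁ * x₂ / (u : ℝ)) ↔ ℓ₁ * (k : ℝ) ≤ (u : ℝ)) := by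
        rw [harg, hℓ₁, le_div_iff₀ hx₁, div_mul_eq_mul_div, div_le_iff₀ hy₂0]
        constructor <;> intro h <;> nlinarith
      exact if_congr (and_congr_right fun _ => hiffc) (by ring) rfl
    have hQ : (∑ k ∈ Icc 1 K, ∑ u ∈ Icc 1 K, (if (k : ℝ) ≤ y₂ ∧ (u : ℝ) ≤ (k : ℝ) * x₁ / y₂ then b₂ k * (k : ℂ) ^ (s - δ) * (a₁ u * (u : ℂ) ^ (-s)) else 0)) = (∑ k ∈ Icc 1 K, ∑ u ∈ Icc 1 K, (if ℓ₁ * (k : ℝ) ≤ x₁ ∧ (u : ℝ) ≤ ℓ₁ * (k : ℝ) then b₂ k * (k : ℂ) ^ (s - δ) * (a₁ u * (u : ℂ) ^ (-s)) else 0)) := by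
      refine Finset.sum_congr rfl fun k _ => Finset.sum_congr rfl fun u _ => ?_
      have hLL : (k : ℝ) * x₁ / y₂ = ℓ₁ * (k : ℝ) := by rw [hℓ₁]; ring
      exact if_congr (and_congr (hky k) (by rw [hLL])) rfl rfl
    have hD : (∑ k ∈ Icc 1 K, ∑ u ∈ Icc 1 K, (if (u : ℝ) ≤ x₁ ∧ ℓ₁ * (k : ℝ) ≤ x₁ then b₂ k * (k : ℂ) ^ (s - δ) * (a₁ u * (u : ℂ) ^ (-s)) else 0)) = (∑ k ∈ Icc 1 K, (if (k : ℝ) ≤ y₂ then b₂ k * (k : ℂ) ^ (s - δ) else 0)) * (∑ u ∈ Icc 1 K, (if (u : ℝ) ≤ x₁ then a₁ u * (u : ℂ) ^ (-s) else 0)) := by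
      have hDiff : ∀ k u : ℕ, (((u : ℝ) ≤ x₁ ∧ ℓ₁ * (k : ℝ) ≤ x₁) ↔ ((k : ℝ) ≤ y₂ ∧ (u : ℝ) ≤ x₁)) := by
        intro k u
        constructor
        · rintro ⟨h1, h2⟩; exact ⟨(hky k).mpr h2, h1⟩
        · rintro ⟨h1, h2⟩; exact ⟨h2, (hky k).mp h1⟩
      refine Eq.trans (Finset.sum_congr rfl fun k _ => Finset.sum_congr rfl fun u _ =>
        if_congr (hDiff k u) rfl rfl) ?_
      exact aux_prod_ind (fun k => (k : ℝ) ≤ y₂) (fun u => (u : ℝ) ≤ x₁) (fun k => b₂ k * (k : ℂ) ^ (s - δ)) (fun u => a₁ u * (u : ℂ) ^ (-s))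
    have hmain : (∑ k ∈ Icc 1 K, ∑ u ∈ Icc 1 K, (if (u : ℝ) ≤ x₁ ∧ ℓ₁ * (k : ℝ) ≤ (u : ℝ) then b₂ k * (k : ℂ) ^ (s - δ) * (a₁ u * (u : ℂ) ^ (-s)) else 0)) + (∑ k ∈ Icc 1 K, ∑ u ∈ Icc 1 K, (if ℓ₁ * (k : ℝ) ≤ x₁ ∧ (u : ℝ) ≤ ℓ₁ * (k : ℝ) then b₂ k * (k : ℂ) ^ (s - δ) * (a₁ u * (u : ℂ) ^ (-s)) else 0)) - (∑ k ∈ Icc 1 K, ∑ u ∈ Icc 1 K, (if (u : ℝ) ≤ x₁ ∧ ℓ₁ * (k : ℝ) ≤ x₁ then b₂ k * (k : ℂ) ^ (s - δ) * (a₁ u * (u : ℂ) ^ (-s)) else 0)) = (ℓ₁ : ℂ) ^ (-s) * (∑ n ∈ Icc 1 ⌊y₂⌋₊, b₂ n * tilde a₁ (ℓ₁ * (n:ℝ)) * (n : ℂ) ^ (-δ)) := by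
      rw [← Finset.sum_add_distrib, ← Finset.sum_sub_distrib]
      have cvR : (∑ n ∈ Icc 1 ⌊y₂⌋₊, b₂ n * tilde a₁ (ℓ₁ * (n:ℝ)) * (n : ℂ) ^ (-δ)) = ∑ k ∈ Icc 1 K,
          (if (k : ℝ) ≤ y₂ then b₂ k * tilde a₁ (ℓ₁ * (k : ℝ)) * (k : ℂ) ^ (-δ) else 0) :=
        aux_sum_indic hKy₂ (fun n => b₂ n * tilde a₁ (ℓ₁ * (n : ℝ)) * (n : ℂ) ^ (-δ))
      rw [cvR, Finset.mul_sum]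
      refine Finset.sum_congr rfl fun k hk => ?_
      rw [← Finset.sum_add_distrib, ← Finset.sum_sub_distrib]
      have hpt : ∀ u ∈ Icc 1 K,
          ((if (u : ℝ) ≤ x₁ ∧ ℓ₁ * (k : ℝ) ≤ (u : ℝ) then b₂ k * (k : ℂ) ^ (s - δ) * (a₁ u * (u : ℂ) ^ (-s)) else 0)
            + (if ℓ₁ * (k : ℝ) ≤ x₁ ∧ (u : ℝ) ≤ ℓ₁ * (k : ℝ) then b₂ k * (k : ℂ) ^ (s - δ) * (a₁ u * (u : ℂ) ^ (-s)) else 0)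
            - (if (u : ℝ) ≤ x₁ ∧ ℓ₁ * (k : ℝ) ≤ x₁ then b₂ k * (k : ℂ) ^ (s - δ) * (a₁ u * (u : ℂ) ^ (-s)) else 0))
          = (if ℓ₁ * (k : ℝ) ≤ x₁ ∧ (u : ℝ) = ℓ₁ * (k : ℝ) then b₂ k * (k : ℂ) ^ (s - δ) * (a₁ u * (u : ℂ) ^ (-s)) else 0) :=
        fun u _ => aux_pt3 (u : ℝ) (ℓ₁ * (k : ℝ)) x₁ _
      rw [Finset.sum_congr rfl hpt]
      have hand : (∑ u ∈ Icc 1 K, if ℓ₁ * (k : ℝ) ≤ x₁ ∧ (u : ℝ) = ℓ₁ * (k : ℝ) then b₂ k * (k : ℂ) ^ (s - δ) * (a₁ u * (u : ℂ) ^ (-s)) else 0)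
          = if ℓ₁ * (k : ℝ) ≤ x₁ then b₂ k * (k : ℂ) ^ (s - δ) * (∑ u ∈ Icc 1 K,
              (if (u : ℝ) = ℓ₁ * (k : ℝ) then a₁ u * (u : ℂ) ^ (-s) else 0)) else 0 := by
        exact aux_sum_if_and _ _ _ _
      rw [hand]
      by_cases hc : (k : ℝ) ≤ y₂
      · have hLx : ℓ₁ * (k : ℝ) ≤ x₁ := (hky k).mp hc
        rw [if_pos hLx, if_pos hc]
        have cv2 : (∑ u ∈ Icc 1 K, if (u : ℝ) = ℓ₁ * (k : ℝ) then a₁ u * (u : ℂ) ^ (-s) else 0)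
            = if 1 ≤ ⌊ℓ₁ * (k : ℝ)⌋₊ ∧ ((⌊ℓ₁ * (k : ℝ)⌋₊ : ℕ) : ℝ) = ℓ₁ * (k : ℝ)
              then a₁ ⌊ℓ₁ * (k : ℝ)⌋₊ * ((⌊ℓ₁ * (k : ℝ)⌋₊ : ℕ) : ℂ) ^ (-s) else 0 :=
          aux_sum_eq_real (le_trans (Nat.floor_mono hLx) hKx₁) (fun u => a₁ u * (u : ℂ) ^ (-s))
        rw [cv2]
        unfold tilde
        by_cases hint : 1 ≤ ⌊ℓ₁ * (k : ℝ)⌋₊ ∧ ((⌊ℓ₁ * (k : ℝ)⌋₊ : ℕ) : ℝ) = ℓ₁ * (k : ℝ)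
        · rw [if_pos hint, if_pos hint]
          have hk1 : 1 ≤ k := (mem_Icc.1 hk).1
          have hk0 : ((k : ℕ) : ℂ) ≠ 0 := Nat.cast_ne_zero.mpr (by omega)
          have hFc : ((⌊ℓ₁ * (k : ℝ)⌋₊ : ℕ) : ℂ) = (ℓ₁ : ℂ) * ((k : ℕ) : ℂ) := by
            exact_mod_cast congrArg Complex.ofReal hint.2
          have hmul : ((ℓ₁ : ℂ) * ((k : ℕ) : ℂ)) ^ (-s)
              = (ℓ₁ : ℂ) ^ (-s) * ((k : ℕ) : ℂ) ^ (-s) := by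
            rw [← Complex.ofReal_natCast k,
              Complex.mul_cpow_ofReal_nonneg hℓ₁0.le (Nat.cast_nonneg k)]
          have hpows : ((k : ℕ) : ℂ) ^ (-s) * ((k : ℕ) : ℂ) ^ (s - δ)
              = ((k : ℕ) : ℂ) ^ (-δ) := by
            rw [← Complex.cpow_add _ _ hk0, show -s + (s - δ) = -δ from by ring]
          rw [hFc, hmul]
          linear_combination (b₂ k * a₁ ⌊ℓ₁ * (k : ℝ)⌋₊ * (ℓ₁ : ℂ) ^ (-s)) * hpows
        · rw [if_neg hint, if_neg hint]; ring
      · rw [if_neg (fun h => hc ((hky k).mpr h)), if_neg hc]; ring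
    linear_combination hP + hQ + hmain + hD
  have hk4 : (∑ v ∈ Icc 1 K, ∑ m ∈ Icc 1 K, (if (v : ℝ) ≤ x₂ ∧ (m : ℝ) ≤ T₁ / (x₁ * x₂ / (v : ℝ)) then a₂ v * (v : ℂ) ^ (-s) * (b₁ m * (m : ℂ) ^ (s - δ)) else 0)) + (∑ m ∈ Icc 1 K, ∑ v ∈ Icc 1 K, (if (m : ℝ) ≤ y₁ ∧ (v : ℝ) ≤ (m : ℝ) * x₂ / y₁ then b₁ m * (m : ℂ) ^ (s - δ) * (a₂ v * (v : ℂ) ^ (-s)) else 0)) = (∑ m ∈ Icc 1 K, (if (m : ℝ) ≤ y₁ then b₁ m * (m : ℂ) ^ (s - δ) else 0)) * (∑ v ∈ Icc 1 K, (if (v : ℝ) ≤ x₂ then a₂ v * (v : ℂ) ^ (-s) else 0)) + (ℓ₂ : ℂ) ^ (-s) * (∑ m ∈ Icc 1 ⌊y₁⌋₊, b₁ m * tilde a₂ (ℓ₂ * m) * (m : ℂ) ^ (-δ)) := by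
    have hky : ∀ m : ℕ, ((m : ℝ) ≤ y₁ ↔ ℓ₂ * (m : ℝ) ≤ x₂) := by
      intro m
      rw [hℓ₂, div_mul_eq_mul_div, div_le_iff₀ hy₁0]
      constructor <;> intro h <;> nlinarith
    have hP : (∑ v ∈ Icc 1 K, ∑ m ∈ Icc 1 K, (if (v : ℝ) ≤ x₂ ∧ (m : ℝ) ≤ T₁ / (x₁ * x₂ / (v : ℝ)) then a₂ v * (v : ℂ) ^ (-s) * (b₁ m * (m : ℂ) ^ (s - δ)) else 0)) = (∑ m ∈ Icc 1 K, ∑ v ∈ Icc 1 K, (if (v : ℝ) ≤ x₂ ∧ ℓ₂ * (m : ℝ) ≤ (v : ℝ) then b₁ m * (m : ℂ) ^ (s - δ) * (a₂ v * (v : ℂ) ^ (-s)) else 0)) := by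
      conv_lhs => rw [Finset.sum_comm]
      refine Finset.sum_congr rfl fun m _ => Finset.sum_congr rfl fun v hv => ?_
      have hv1 : (1 : ℝ) ≤ (v : ℝ) := by exact_mod_cast (mem_Icc.1 hv).1
      have hv0 : (0 : ℝ) < (v : ℝ) := by linarith
      have harg : T₁ / (x₁ * x₂ / (v : ℝ)) = y₁ * (v : ℝ) / x₂ := by
        rw [hy₁, harg_d T₁ x₁ x₂ _ hx₁.ne' hx₂.ne' hv0.ne']
      have hiffc : ((m : ℝ) ≤ T₁ / (x₁ * x₂ / (v : ℝ)) ↔ ℓ₂ * (m : ℝ) ≤ (v : ℝ)) := by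
        rw [harg, hℓ₂, le_div_iff₀ hx₂, div_mul_eq_mul_div, div_le_iff₀ hy₁0]
        constructor <;> intro h <;> nlinarith
      exact if_congr (and_congr_right fun _ => hiffc) (by ring) rfl
    have hQ : (∑ m ∈ Icc 1 K, ∑ v ∈ Icc 1 K, (if (m : ℝ) ≤ y₁ ∧ (v : ℝ) ≤ (m : ℝ) * x₂ / y₁ then b₁ m * (m : ℂ) ^ (s - δ) * (a₂ v * (v : ℂ) ^ (-s)) else 0)) = (∑ m ∈ Icc 1 K, ∑ v ∈ Icc 1 K, (if ℓ₂ * (m : ℝ) ≤ x₂ ∧ (v : ℝ) ≤ ℓ₂ * (m : ℝ) then b₁ m * (m : ℂ) ^ (s - δ) * (a₂ v * (v : ℂ) ^ (-s)) else 0)) := by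
      refine Finset.sum_congr rfl fun m _ => Finset.sum_congr rfl fun v _ => ?_
      have hLL : (m : ℝ) * x₂ / y₁ = ℓ₂ * (m : ℝ) := by rw [hℓ₂]; ring
      exact if_congr (and_congr (hky m) (by rw [hLL])) rfl rfl
    have hD : (∑ m ∈ Icc 1 K, ∑ v ∈ Icc 1 K, (if (v : ℝ) ≤ x₂ ∧ ℓ₂ * (m : ℝ) ≤ x₂ then b₁ m * (m : ℂ) ^ (s - δ) * (a₂ v * (v : ℂ) ^ (-s)) else 0)) = (∑ m ∈ Icc 1 K, (if (m : ℝ) ≤ y₁ then b₁ m * (m : ℂ) ^ (s - δ) else 0)) * (∑ v ∈ Icc 1 K, (if (v : ℝ) ≤ x₂ then a₂ v * (v : ℂ) ^ (-s) else 0)) := by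
      have hDiff : ∀ m v : ℕ, (((v : ℝ) ≤ x₂ ∧ ℓ₂ * (m : ℝ) ≤ x₂) ↔ ((m : ℝ) ≤ y₁ ∧ (v : ℝ) ≤ x₂)) := by
        intro m v
        constructor
        · rintro ⟨h1, h2⟩; exact ⟨(hky m).mpr h2, h1⟩
        · rintro ⟨h1, h2⟩; exact ⟨h2, (hky m).mp h1⟩
      refine Eq.trans (Finset.sum_congr rfl fun m _ => Finset.sum_congr rfl fun v _ =>
        if_congr (hDiff m v) rfl rfl) ?_
      exact aux_prod_ind (fun m => (m : ℝ) ≤ y₁) (fun v => (v : ℝ) ≤ x₂) (fun m => b₁ m * (m : ℂ) ^ (s - δ)) (fun v => a₂ v * (v : ℂ) ^ (-s))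
    have hmain : (∑ m ∈ Icc 1 K, ∑ v ∈ Icc 1 K, (if (v : ℝ) ≤ x₂ ∧ ℓ₂ * (m : ℝ) ≤ (v : ℝ) then b₁ m * (m : ℂ) ^ (s - δ) * (a₂ v * (v : ℂ) ^ (-s)) else 0)) + (∑ m ∈ Icc 1 K, ∑ v ∈ Icc 1 K, (if ℓ₂ * (m : ℝ) ≤ x₂ ∧ (v : ℝ) ≤ ℓ₂ * (m : ℝ) then b₁ m * (m : ℂ) ^ (s - δ) * (a₂ v * (v : ℂ) ^ (-s)) else 0)) - (∑ m ∈ Icc 1 K, ∑ v ∈ Icc 1 K, (if (v : ℝ) ≤ x₂ ∧ ℓ₂ * (m : ℝ) ≤ x₂ then b₁ m * (m : ℂ) ^ (s - δ) * (a₂ v * (v : ℂ) ^ (-s)) else 0)) = (ℓ₂ : ℂ) ^ (-s) * (∑ n ∈ Icc 1 ⌊y₁⌋₊, b₁ n * tilde a₂ (ℓ₂ * (n:ℝ)) * (n : ℂ) ^ (-δ)) := by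
      rw [← Finset.sum_add_distrib, ← Finset.sum_sub_distrib]
      have cvR : (∑ n ∈ Icc 1 ⌊y₁⌋₊, b₁ n * tilde a₂ (ℓ₂ * (n:ℝ)) * (n : ℂ) ^ (-δ)) = ∑ m ∈ Icc 1 K,
          (if (m : ℝ) ≤ y₁ then b₁ m * tilde a₂ (ℓ₂ * (m : ℝ)) * (m : ℂ) ^ (-δ) else 0) :=
        aux_sum_indic hKy₁ (fun n => b₁ n * tilde a₂ (ℓ₂ * (n : ℝ)) * (n : ℂ) ^ (-δ))
      rw [cvR, Finset.mul_sum]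
      refine Finset.sum_congr rfl fun m hm => ?_
      rw [← Finset.sum_add_distrib, ← Finset.sum_sub_distrib]
      have hpt : ∀ v ∈ Icc 1 K,
          ((if (v : ℝ) ≤ x₂ ∧ ℓ₂ * (m : ℝ) ≤ (v : ℝ) then b₁ m * (m : ℂ) ^ (s - δ) * (a₂ v * (v : ℂ) ^ (-s)) else 0)
            + (if ℓ₂ * (m : ℝ) ≤ x₂ ∧ (v : ℝ) ≤ ℓ₂ * (m : ℝ) then b₁ m * (m : ℂ) ^ (s - δ) * (a₂ v * (v : ℂ) ^ (-s)) else 0)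
            - (if (v : ℝ) ≤ x₂ ∧ ℓ₂ * (m : ℝ) ≤ x₂ then b₁ m * (m : ℂ) ^ (s - δ) * (a₂ v * (v : ℂ) ^ (-s)) else 0))
          = (if ℓ₂ * (m : ℝ) ≤ x₂ ∧ (v : ℝ) = ℓ₂ * (m : ℝ) then b₁ m * (m : ℂ) ^ (s - δ) * (a₂ v * (v : ℂ) ^ (-s)) else 0) :=
        fun v _ => aux_pt3 (v : ℝ) (ℓ₂ * (m : ℝ)) x₂ _
      rw [Finset.sum_congr rfl hpt]
      have hand : (∑ v ∈ Icc 1 K, if ℓ₂ * (m : ℝ) ≤ x₂ ∧ (v : ℝ) = ℓ₂ * (m : ℝ) then b₁ m * (m : ℂ) ^ (s - δ) * (a₂ v * (v : ℂ) ^ (-s)) else 0)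
          = if ℓ₂ * (m : ℝ) ≤ x₂ then b₁ m * (m : ℂ) ^ (s - δ) * (∑ v ∈ Icc 1 K,
              (if (v : ℝ) = ℓ₂ * (m : ℝ) then a₂ v * (v : ℂ) ^ (-s) else 0)) else 0 := by
        exact aux_sum_if_and _ _ _ _
      rw [hand]
      by_cases hc : (m : ℝ) ≤ y₁
      · have hLx : ℓ₂ * (m : ℝ) ≤ x₂ := (hky m).mp hc
        rw [if_pos hLx, if_pos hc]
        have cv2 : (∑ v ∈ Icc 1 K, if (v : ℝ) = ℓ₂ * (m : ℝ) then a₂ v * (v : ℂ) ^ (-s) else 0)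
            = if 1 ≤ ⌊ℓ₂ * (m : ℝ)⌋₊ ∧ ((⌊ℓ₂ * (m : ℝ)⌋₊ : ℕ) : ℝ) = ℓ₂ * (m : ℝ)
              then a₂ ⌊ℓ₂ * (m : ℝ)⌋₊ * ((⌊ℓ₂ * (m : ℝ)⌋₊ : ℕ) : ℂ) ^ (-s) else 0 :=
          aux_sum_eq_real (le_trans (Nat.floor_mono hLx) hKx₂) (fun v => a₂ v * (v : ℂ) ^ (-s))
        rw [cv2]
        unfold tilde
        by_cases hint : 1 ≤ ⌊ℓ₂ * (m : ℝ)⌋₊ ∧ ((⌊ℓ₂ * (m : ℝ)⌋₊ : ℕ) : ℝ) = ℓ₂ * (m : ℝ)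
        · rw [if_pos hint, if_pos hint]
          have hm1 : 1 ≤ m := (mem_Icc.1 hm).1
          have hm0 : ((m : ℕ) : ℂ) ≠ 0 := Nat.cast_ne_zero.mpr (by omega)
          have hFc : ((⌊ℓ₂ * (m : ℝ)⌋₊ : ℕ) : ℂ) = (ℓ₂ : ℂ) * ((m : ℕ) : ℂ) := by
            exact_mod_cast congrArg Complex.ofReal hint.2
          have hmul : ((ℓ₂ : ℂ) * ((m : ℕ) : ℂ)) ^ (-s)
              = (ℓ₂ : ℂ) ^ (-s) * ((m : ℕ) : ℂ) ^ (-s) := by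
            rw [← Complex.ofReal_natCast m,
              Complex.mul_cpow_ofReal_nonneg hℓ₂0.le (Nat.cast_nonneg m)]
          have hpows : ((m : ℕ) : ℂ) ^ (-s) * ((m : ℕ) : ℂ) ^ (s - δ)
              = ((m : ℕ) : ℂ) ^ (-δ) := by
            rw [← Complex.cpow_add _ _ hm0, show -s + (s - δ) = -δ from by ring]
          rw [hFc, hmul]
          linear_combination (b₁ m * a₂ ⌊ℓ₂ * (m : ℝ)⌋₊ * (ℓ₂ : ℂ) ^ (-s)) * hpows
        · rw [if_neg hint, if_neg hint]; ring
      · rw [if_neg (fun h => hc ((hky m).mpr h)), if_neg hc]; ring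
    linear_combination hP + hQ + hmain + hD
  have hh1 : f₁ = (∑ u ∈ Icc 1 K, (if (u : ℝ) ≤ x₁ then a₁ u * (u : ℂ) ^ (-s) else 0)) + ψ₁ * (∑ m ∈ Icc 1 K, (if (m : ℝ) ≤ y₁ then b₁ m * (m : ℂ) ^ (s - δ) else 0)) + E₁ x₁ := by
    have cva : (∑ n ∈ Icc 1 ⌊x₁⌋₊, a₁ n * (n : ℂ) ^ (-s)) = (∑ u ∈ Icc 1 K, (if (u : ℝ) ≤ x₁ then a₁ u * (u : ℂ) ^ (-s) else 0)) := aux_sum_indic hKx₁ _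
    have cvb : (∑ n ∈ Icc 1 ⌊y₁⌋₊, b₁ n * (n : ℂ) ^ (s - δ)) = (∑ m ∈ Icc 1 K, (if (m : ℝ) ≤ y₁ then b₁ m * (m : ℂ) ^ (s - δ) else 0)) := aux_sum_indic hKy₁ _
    have h := hf₁ x₁ hx₁
    rw [← hy₁, cva, cvb] at h
    exact h
  have hh2 : f₂ = (∑ v ∈ Icc 1 K, (if (v : ℝ) ≤ x₂ then a₂ v * (v : ℂ) ^ (-s) else 0)) + ψ₂ * (∑ k ∈ Icc 1 K, (if (k : ℝ) ≤ y₂ then b₂ k * (k : ℂ) ^ (s - δ) else 0)) + E₂ x₂ := by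
    have cva : (∑ n ∈ Icc 1 ⌊x₂⌋₊, a₂ n * (n : ℂ) ^ (-s)) = (∑ v ∈ Icc 1 K, (if (v : ℝ) ≤ x₂ then a₂ v * (v : ℂ) ^ (-s) else 0)) := aux_sum_indic hKx₂ _
    have cvb : (∑ n ∈ Icc 1 ⌊y₂⌋₊, b₂ n * (n : ℂ) ^ (s - δ)) = (∑ k ∈ Icc 1 K, (if (k : ℝ) ≤ y₂ then b₂ k * (k : ℂ) ^ (s - δ) else 0)) := aux_sum_indic hKy₂ _
    have h := hf₂ x₂ hx₂
    rw [← hy₂, cva, cvb] at h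
    exact h
  linear_combination (-1 : ℂ) * hG1 - hHyp1 - hS1 - hS2 + hS3 - ψ₁ * ψ₂ * hG2
    - ψ₁ * ψ₂ * hHyp2 - ψ₁ * hT1s - ψ₂ * hT2s + ψ₁ * ψ₂ * hT3s
    + hE3 + hE4 + ψ₁ * hE5 + ψ₂ * hE6 + ψ₂ * hk3 + ψ₁ * hk4
    + (f₂ - (∑ v ∈ Icc 1 K, (if (v : ℝ) ≤ x₂ then a₂ v * (v : ℂ) ^ (-s) else 0)) - ψ₂ * (∑ k ∈ Icc 1 K, (if (k : ℝ) ≤ y₂ then b₂ k * (k : ℂ) ^ (s - δ) else 0))) * hh1 + E₁ x₁ * hh2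
end

section
/- Let s, δ, ψ, f be complex numbers, let a, b : ℕ → ℂ, let T > 0 be real, and let E₁ : ℝ → ℂ be a function such that for every real x > 0 one has f = ∑_{n ≤ x} a(n) n^{−s} + ψ ∑_{n ≤ T/x} b(n) n^{s−δ} + E₁(x). Set A(n) = ∑_{uv=n} a(u)a(v) and B(n) = ∑_{uv=n} b(u)b(v). Then for every x > 0, writing y = T/x and ℓ = x/y, one has f² = ∑_{n ≤ x²} A(n) n^{−s} + ψ² ∑_{n ≤ y²} B(n) n^{s−δ} + E₂(x²), where E₂(x²) = 2{ ∑_{n ≤ x} a(n) n^{−s} E₁(x²/n) + ψ ∑_{n ≤ y} b(n) n^{s−δ} E₁(nx/y) + L } + E₁(x)², with L = ψ ℓ^{−s} ∑_{n ≤ y} b(n) ã(ℓn) n^{−δ}, where ã(u) = a(u) when u is a positive integer and ã(u) = 0 otherwise. -/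
open Finset

private lemma sum_filter_prod_left (s t : Finset ℕ) (P : ℕ → ℕ → Prop)
    [∀ u v : ℕ, Decidable (P u v)] (g : ℕ → ℕ → ℂ) :
    ∑ p ∈ (s ×ˢ t).filter (fun p => P p.1 p.2), g p.1 p.2
      = ∑ u ∈ s, ∑ v ∈ t.filter (fun v => P u v), g u v := by
  rw [Finset.sum_filter, Finset.sum_product]
  simp [Finset.sum_filter]

private lemma sum_filter_prod_right (s t : Finset ℕ) (P : ℕ → ℕ → Prop)
    [∀ u v : ℕ, Decidable (P u v)] (g : ℕ → ℕ → ℂ) :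
    ∑ p ∈ (s ×ˢ t).filter (fun p => P p.1 p.2), g p.1 p.2
      = ∑ v ∈ t, ∑ u ∈ s.filter (fun u => P u v), g u v := by
  rw [Finset.sum_filter, Finset.sum_product_right]
  simp [Finset.sum_filter]

private lemma natCast_cpow_mul' (u v : ℕ) (w : ℂ) :
    ((u * v : ℕ) : ℂ) ^ w = (u : ℂ) ^ w * (v : ℂ) ^ w := by
  push_cast
  exact Complex.natCast_mul_natCast_cpow u v w

private lemma sum_dA (c : ℕ → ℂ) (w : ℂ) (M : ℕ) :
    ∑ N ∈ Icc 1 M, (∑ p ∈ Nat.divisorsAntidiagonal N, c p.1 * c p.2) * (N : ℂ) ^ w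
    = ∑ p ∈ (Icc 1 M ×ˢ Icc 1 M).filter (fun p => p.1 * p.2 ≤ M),
        (c p.1 * (p.1 : ℂ) ^ w) * (c p.2 * (p.2 : ℂ) ^ w) := by
  have step1 : ∀ N ∈ Icc 1 M,
      (∑ p ∈ Nat.divisorsAntidiagonal N, c p.1 * c p.2) * (N : ℂ) ^ w
      = ∑ p ∈ Nat.divisorsAntidiagonal N, (c p.1 * (p.1 : ℂ) ^ w) * (c p.2 * (p.2 : ℂ) ^ w) := by
    intro N hN
    rw [Finset.sum_mul]
    refine Finset.sum_congr rfl fun p hp => ?_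
    obtain ⟨hpN, -⟩ := Nat.mem_divisorsAntidiagonal.mp hp
    rw [← hpN, natCast_cpow_mul']
    ring
  rw [Finset.sum_congr rfl step1, ← Finset.sum_biUnion]
  · apply Finset.sum_congr _ (fun _ _ => rfl)
    ext p
    simp only [Finset.mem_biUnion, Finset.mem_filter, Finset.mem_product, Finset.mem_Icc,
      Nat.mem_divisorsAntidiagonal]
    constructor
    · rintro ⟨N, ⟨hN1, hNM⟩, hpN, -⟩
      have h2 : 1 ≤ p.1 * p.2 := hpN ▸ hN1
      have ha : 0 < p.1 := Nat.pos_of_ne_zero (by rintro h; rw [h] at h2; simp at h2)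
      have hb : 0 < p.2 := Nat.pos_of_ne_zero (by rintro h; rw [h] at h2; simp at h2)
      have hM : p.1 * p.2 ≤ M := hpN ▸ hNM
      refine ⟨⟨⟨ha, ?_⟩, hb, ?_⟩, hM⟩
      · calc p.1 = p.1 * 1 := (mul_one _).symm
          _ ≤ p.1 * p.2 := Nat.mul_le_mul_left _ hb
          _ ≤ M := hM
      · calc p.2 = 1 * p.2 := (one_mul _).symm
          _ ≤ p.1 * p.2 := Nat.mul_le_mul_right _ ha
          _ ≤ M := hM
    · rintro ⟨⟨⟨ha, -⟩, hb, -⟩, hM⟩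
      exact ⟨p.1 * p.2, ⟨Nat.one_le_iff_ne_zero.mpr (Nat.mul_ne_zero (by omega) (by omega)), hM⟩,
        rfl, Nat.mul_ne_zero (by omega) (by omega)⟩
  · intro N hN N' hN' hne
    simp only [Function.onFun]
    rw [Finset.disjoint_left]
    intro p hp hp'
    exact hne (((Nat.mem_divisorsAntidiagonal.mp hp).1.symm.trans
      (Nat.mem_divisorsAntidiagonal.mp hp').1) ▸ rfl)

private lemma hyperbola (c : ℕ → ℂ) (w : ℂ) (z : ℝ) (hz : 0 < z) :
    ∑ N ∈ Icc 1 ⌊z ^ 2⌋₊, (∑ p ∈ Nat.divisorsAntidiagonal N, c p.1 * c p.2) * (N : ℂ) ^ w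
    = 2 * ∑ n ∈ Icc 1 ⌊z⌋₊, c n * (n : ℂ) ^ w * ∑ m ∈ Icc 1 ⌊z ^ 2 / (n : ℝ)⌋₊, c m * (m : ℂ) ^ w
      - (∑ n ∈ Icc 1 ⌊z⌋₊, c n * (n : ℂ) ^ w) ^ 2 := by
  have hz2 : (0:ℝ) ≤ z ^ 2 := by positivity
  have memM : ∀ n : ℕ, n ≤ ⌊z ^ 2⌋₊ ↔ (n:ℝ) ≤ z ^ 2 := fun n => Nat.le_floor_iff hz2
  have memK : ∀ n : ℕ, n ≤ ⌊z⌋₊ ↔ (n:ℝ) ≤ z := fun n => Nat.le_floor_iff hz.le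
  -- the three finsets of pairs
  set D : Finset (ℕ × ℕ) :=
    (Icc 1 ⌊z ^ 2⌋₊ ×ˢ Icc 1 ⌊z ^ 2⌋₊).filter (fun p => p.1 * p.2 ≤ ⌊z ^ 2⌋₊) with hD
  set A : Finset (ℕ × ℕ) :=
    (Icc 1 ⌊z⌋₊ ×ˢ Icc 1 ⌊z ^ 2⌋₊).filter (fun p => p.1 * p.2 ≤ ⌊z ^ 2⌋₊) with hA
  set B : Finset (ℕ × ℕ) :=
    (Icc 1 ⌊z ^ 2⌋₊ ×ˢ Icc 1 ⌊z⌋₊).filter (fun p => p.1 * p.2 ≤ ⌊z ^ 2⌋₊) with hB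
  have hcastle : ∀ u v : ℕ, 1 ≤ u → ((u : ℝ) ≤ z → (u:ℝ) ≤ z ^ 2) := by
    intro u v hu hz'
    have : (1:ℝ) ≤ u := by exact_mod_cast hu
    nlinarith
  have hunion : A ∪ B = D := by
    ext p
    simp only [hA, hB, hD, Finset.mem_union, Finset.mem_filter, Finset.mem_product,
      Finset.mem_Icc, memM, memK]
    push_cast
    constructor
    · rintro (⟨⟨⟨h1, h2⟩, h3, h4⟩, h5⟩ | ⟨⟨⟨h1, h2⟩, h3, h4⟩, h5⟩)
      · have h1' : (1:ℝ) ≤ p.1 := by exact_mod_cast h1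
        exact ⟨⟨⟨h1, by nlinarith⟩, h3, h4⟩, h5⟩
      · have h3' : (1:ℝ) ≤ p.2 := by exact_mod_cast h3
        exact ⟨⟨⟨h1, h2⟩, h3, by nlinarith⟩, h5⟩
    · rintro ⟨⟨⟨h1, h2⟩, h3, h4⟩, h5⟩
      rcases le_or_gt (p.1 : ℝ) z with h | h
      · exact Or.inl ⟨⟨⟨h1, h⟩, h3, h4⟩, h5⟩
      · refine Or.inr ⟨⟨⟨h1, h2⟩, h3, ?_⟩, h5⟩
        by_contra hc
        push_neg at hc
        have h1' : (1:ℝ) ≤ p.1 := by exact_mod_cast h1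
        have h3' : (1:ℝ) ≤ p.2 := by exact_mod_cast h3
        nlinarith
  have hinter : A ∩ B = Icc 1 ⌊z⌋₊ ×ˢ Icc 1 ⌊z⌋₊ := by
    ext p
    simp only [hA, hB, Finset.mem_inter, Finset.mem_filter, Finset.mem_product,
      Finset.mem_Icc, memM, memK]
    push_cast
    constructor
    · rintro ⟨⟨⟨⟨h1, h2⟩, h3, h4⟩, h5⟩, ⟨⟨g1, g2⟩, g3, g4⟩, g5⟩
      exact ⟨⟨h1, h2⟩, g3, g4⟩
    · rintro ⟨⟨h1, h2⟩, h3, h4⟩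
      have h1' : (1:ℝ) ≤ p.1 := by exact_mod_cast h1
      have h3' : (1:ℝ) ≤ p.2 := by exact_mod_cast h3
      exact ⟨⟨⟨⟨h1, h2⟩, h3, by nlinarith⟩, by nlinarith⟩,
        ⟨⟨h1, by nlinarith⟩, h3, h4⟩, by nlinarith⟩
  have hBA : ∑ p ∈ B, (c p.1 * (p.1 : ℂ) ^ w) * (c p.2 * (p.2 : ℂ) ^ w)
      = ∑ p ∈ A, (c p.1 * (p.1 : ℂ) ^ w) * (c p.2 * (p.2 : ℂ) ^ w) := by
    refine Finset.sum_equiv (Equiv.prodComm ℕ ℕ) ?_ ?_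
    · intro p
      simp only [hA, hB, Finset.mem_filter, Finset.mem_product, Equiv.prodComm_apply,
        Prod.fst_swap, Prod.snd_swap]
      rw [mul_comm p.2 p.1]
      tauto
    · intro p hp
      simp only [Equiv.prodComm_apply, Prod.fst_swap, Prod.snd_swap]
      ring
  have hAsum : ∑ p ∈ A, (c p.1 * (p.1 : ℂ) ^ w) * (c p.2 * (p.2 : ℂ) ^ w)
      = ∑ n ∈ Icc 1 ⌊z⌋₊, c n * (n : ℂ) ^ w * ∑ m ∈ Icc 1 ⌊z ^ 2 / (n : ℝ)⌋₊, c m * (m : ℂ) ^ w := by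
    rw [hA]
    rw [sum_filter_prod_left (Icc 1 ⌊z⌋₊) (Icc 1 ⌊z ^ 2⌋₊) (fun u v => u * v ≤ ⌊z ^ 2⌋₊)
      (fun u v => (c u * (u : ℂ) ^ w) * (c v * (v : ℂ) ^ w))]
    refine Finset.sum_congr rfl fun u hu => ?_
    obtain ⟨hu1, hu2⟩ := mem_Icc.mp hu
    have hu0 : (0:ℝ) < u := by exact_mod_cast hu1
    have hfu : (Icc 1 ⌊z ^ 2⌋₊).filter (fun v => u * v ≤ ⌊z ^ 2⌋₊)
        = Icc 1 ⌊z ^ 2 / (u : ℝ)⌋₊ := by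
      ext v
      simp only [Finset.mem_filter, Finset.mem_Icc]
      constructor
      · rintro ⟨⟨h1, h2⟩, h3⟩
        refine ⟨h1, Nat.le_floor ?_⟩
        rw [le_div_iff₀ hu0]
        have : ((u * v : ℕ) : ℝ) ≤ z ^ 2 := by
          rw [← memM]; exact h3
        push_cast at this
        linarith
      · rintro ⟨h1, h2⟩
        have hv : (v:ℝ) ≤ z ^ 2 / (u:ℝ) := (Nat.le_floor_iff (by positivity)).mp h2
        have h3 : (v:ℝ) * u ≤ z ^ 2 := (le_div_iff₀ hu0).mp hv
        have h3' : u * v ≤ ⌊z ^ 2⌋₊ := by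
          rw [memM]; push_cast; nlinarith
        refine ⟨⟨h1, ?_⟩, h3'⟩
        rw [memM]
        have h1' : (1:ℝ) ≤ v := by exact_mod_cast h1
        have hu1' : (1:ℝ) ≤ u := by exact_mod_cast hu1
        nlinarith
    rw [hfu, Finset.mul_sum]
  have hAB := Finset.sum_union_inter (s₁ := A) (s₂ := B)
    (f := fun p : ℕ × ℕ => (c p.1 * (p.1 : ℂ) ^ w) * (c p.2 * (p.2 : ℂ) ^ w))
  rw [hunion, hinter] at hAB
  have hsq : ∑ p ∈ Icc 1 ⌊z⌋₊ ×ˢ Icc 1 ⌊z⌋₊,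
      (c p.1 * (p.1 : ℂ) ^ w) * (c p.2 * (p.2 : ℂ) ^ w)
      = (∑ n ∈ Icc 1 ⌊z⌋₊, c n * (n : ℂ) ^ w) ^ 2 := by
    rw [sq, Finset.sum_mul_sum]
    rw [Finset.sum_product]
  have hDsum := sum_dA c w ⌊z ^ 2⌋₊
  rw [← hD] at hDsum
  rw [hDsum]
  rw [hBA, hAsum] at hAB
  rw [hsq] at hAB
  linear_combination hAB

private lemma cross (a b : ℕ → ℂ) (s δ : ℂ) (x y ℓ : ℝ) (hx : 0 < x) (hy : 0 < y)
    (hxy : ℓ * y = x) (hℓ0 : 0 < ℓ) :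
    (∑ u ∈ Icc 1 ⌊x⌋₊, a u * (u : ℂ) ^ (-s) * ∑ v ∈ Icc 1 ⌊(u : ℝ) / ℓ⌋₊, b v * (v : ℂ) ^ (s - δ))
    + (∑ v ∈ Icc 1 ⌊y⌋₊, b v * (v : ℂ) ^ (s - δ) * ∑ u ∈ Icc 1 ⌊ℓ * (v : ℝ)⌋₊, a u * (u : ℂ) ^ (-s))
    = (∑ u ∈ Icc 1 ⌊x⌋₊, a u * (u : ℂ) ^ (-s)) * (∑ v ∈ Icc 1 ⌊y⌋₊, b v * (v : ℂ) ^ (s - δ))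
      + (ℓ : ℂ) ^ (-s) * ∑ v ∈ Icc 1 ⌊y⌋₊, b v * tilde a (ℓ * (v : ℝ)) * (v : ℂ) ^ (-δ) := by
  have hxle : ∀ u : ℕ, u ≤ ⌊x⌋₊ ↔ (u:ℝ) ≤ x := fun u => Nat.le_floor_iff hx.le
  have hyle : ∀ v : ℕ, v ≤ ⌊y⌋₊ ↔ (v:ℝ) ≤ y := fun v => Nat.le_floor_iff hy.le
  set A : Finset (ℕ × ℕ) :=
    (Icc 1 ⌊x⌋₊ ×ˢ Icc 1 ⌊y⌋₊).filter (fun p => ℓ * (p.2 : ℝ) ≤ (p.1 : ℝ)) with hA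
  set B : Finset (ℕ × ℕ) :=
    (Icc 1 ⌊x⌋₊ ×ˢ Icc 1 ⌊y⌋₊).filter (fun p => (p.1 : ℝ) ≤ ℓ * (p.2 : ℝ)) with hB
  have hunion : A ∪ B = Icc 1 ⌊x⌋₊ ×ˢ Icc 1 ⌊y⌋₊ := by
    rw [hA, hB, ← Finset.filter_or]
    exact Finset.filter_true_of_mem fun p _ => le_total _ _
  have hinter : A ∩ B
      = (Icc 1 ⌊x⌋₊ ×ˢ Icc 1 ⌊y⌋₊).filter (fun p => (p.1 : ℝ) = ℓ * (p.2 : ℝ)) := by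
    rw [hA, hB, ← Finset.filter_and]
    refine Finset.filter_congr fun p _ => ?_
    constructor
    · rintro ⟨h1, h2⟩; exact le_antisymm h2 h1
    · rintro h; exact ⟨h.ge, h.le⟩
  have hAsum : (∑ u ∈ Icc 1 ⌊x⌋₊, a u * (u : ℂ) ^ (-s)
        * ∑ v ∈ Icc 1 ⌊(u : ℝ) / ℓ⌋₊, b v * (v : ℂ) ^ (s - δ))
      = ∑ p ∈ A, (a p.1 * (p.1 : ℂ) ^ (-s)) * (b p.2 * (p.2 : ℂ) ^ (s - δ)) := by
    rw [hA]
    rw [sum_filter_prod_left (Icc 1 ⌊x⌋₊) (Icc 1 ⌊y⌋₊) (fun u v => ℓ * (v : ℝ) ≤ (u : ℝ))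
      (fun u v => (a u * (u : ℂ) ^ (-s)) * (b v * (v : ℂ) ^ (s - δ)))]
    refine Finset.sum_congr rfl fun u hu => ?_
    obtain ⟨hu1, hu2⟩ := mem_Icc.mp hu
    have hux : (u:ℝ) ≤ x := (hxle u).mp hu2
    have hfu : (Icc 1 ⌊y⌋₊).filter (fun v : ℕ => ℓ * (v : ℝ) ≤ (u : ℝ))
        = Icc 1 ⌊(u : ℝ) / ℓ⌋₊ := by
      ext v
      simp only [Finset.mem_filter, Finset.mem_Icc]
      constructor
      · rintro ⟨⟨h1, h2⟩, h3⟩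
        exact ⟨h1, Nat.le_floor ((le_div_iff₀' hℓ0).mpr h3)⟩
      · rintro ⟨h1, h2⟩
        have hv : (v:ℝ) ≤ (u:ℝ) / ℓ := (Nat.le_floor_iff (by positivity)).mp h2
        have h3 : ℓ * (v:ℝ) ≤ (u:ℝ) := (le_div_iff₀' hℓ0).mp hv
        have hvy : (v:ℝ) ≤ y := by nlinarith
        exact ⟨⟨h1, (hyle v).mpr hvy⟩, h3⟩
    rw [hfu, Finset.mul_sum]
  have hBsum : (∑ v ∈ Icc 1 ⌊y⌋₊, b v * (v : ℂ) ^ (s - δ)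
        * ∑ u ∈ Icc 1 ⌊ℓ * (v : ℝ)⌋₊, a u * (u : ℂ) ^ (-s))
      = ∑ p ∈ B, (a p.1 * (p.1 : ℂ) ^ (-s)) * (b p.2 * (p.2 : ℂ) ^ (s - δ)) := by
    rw [hB]
    rw [sum_filter_prod_right (Icc 1 ⌊x⌋₊) (Icc 1 ⌊y⌋₊) (fun u v => (u : ℝ) ≤ ℓ * (v : ℝ))
      (fun u v => (a u * (u : ℂ) ^ (-s)) * (b v * (v : ℂ) ^ (s - δ)))]
    refine Finset.sum_congr rfl fun v hv => ?_
    obtain ⟨hv1, hv2⟩ := mem_Icc.mp hv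
    have hvy : (v:ℝ) ≤ y := (hyle v).mp hv2
    have hfv : (Icc 1 ⌊x⌋₊).filter (fun u : ℕ => (u : ℝ) ≤ ℓ * (v : ℝ))
        = Icc 1 ⌊ℓ * (v : ℝ)⌋₊ := by
      ext u
      simp only [Finset.mem_filter, Finset.mem_Icc]
      constructor
      · rintro ⟨⟨h1, h2⟩, h3⟩
        exact ⟨h1, Nat.le_floor h3⟩
      · rintro ⟨h1, h2⟩
        have h3 : (u:ℝ) ≤ ℓ * (v:ℝ) := by
          refine le_trans ?_ (le_refl _)
          exact (Nat.le_floor_iff (by positivity)).mp h2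
        have hux : (u:ℝ) ≤ x := by nlinarith
        exact ⟨⟨h1, (hxle u).mpr hux⟩, h3⟩
    rw [hfv, Finset.mul_sum]
    refine Finset.sum_congr rfl fun u _ => by ring
  have hprod : ∑ p ∈ Icc 1 ⌊x⌋₊ ×ˢ Icc 1 ⌊y⌋₊,
      (a p.1 * (p.1 : ℂ) ^ (-s)) * (b p.2 * (p.2 : ℂ) ^ (s - δ))
      = (∑ u ∈ Icc 1 ⌊x⌋₊, a u * (u : ℂ) ^ (-s))
        * (∑ v ∈ Icc 1 ⌊y⌋₊, b v * (v : ℂ) ^ (s - δ)) := by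
    rw [Finset.sum_mul_sum]
    rw [Finset.sum_product]
  have hdiag : ∑ p ∈ (Icc 1 ⌊x⌋₊ ×ˢ Icc 1 ⌊y⌋₊).filter (fun p => (p.1 : ℝ) = ℓ * (p.2 : ℝ)),
      (a p.1 * (p.1 : ℂ) ^ (-s)) * (b p.2 * (p.2 : ℂ) ^ (s - δ))
      = (ℓ : ℂ) ^ (-s) * ∑ v ∈ Icc 1 ⌊y⌋₊, b v * tilde a (ℓ * (v : ℝ)) * (v : ℂ) ^ (-δ) := by
    rw [sum_filter_prod_right (Icc 1 ⌊x⌋₊) (Icc 1 ⌊y⌋₊) (fun u v => (u : ℝ) = ℓ * (v : ℝ))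
      (fun u v => (a u * (u : ℂ) ^ (-s)) * (b v * (v : ℂ) ^ (s - δ))), Finset.mul_sum]
    refine Finset.sum_congr rfl fun v hv => ?_
    obtain ⟨hv1, hv2⟩ := mem_Icc.mp hv
    have hv0 : (0:ℝ) < v := by exact_mod_cast hv1
    have hvy : (v:ℝ) ≤ y := (hyle v).mp hv2
    have hvne : ((v:ℕ):ℂ) ≠ 0 := Nat.cast_ne_zero.mpr (by omega)
    by_cases hcond : 1 ≤ ⌊ℓ * (v:ℝ)⌋₊ ∧ (⌊ℓ * (v:ℝ)⌋₊ : ℝ) = ℓ * (v:ℝ)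
    · have hsingle : (Icc 1 ⌊x⌋₊).filter (fun u : ℕ => (u:ℝ) = ℓ * (v:ℝ)) = {⌊ℓ * (v:ℝ)⌋₊} := by
        ext u
        simp only [Finset.mem_filter, Finset.mem_Icc, Finset.mem_singleton]
        constructor
        · rintro ⟨⟨h1, h2⟩, h3⟩
          have : (⌊ℓ * (v:ℝ)⌋₊ : ℝ) = (u:ℝ) := by rw [← h3, Nat.floor_natCast]
          exact_mod_cast this.symm
        · rintro rfl
          refine ⟨⟨hcond.1, (hxle _).mpr ?_⟩, hcond.2⟩
          rw [hcond.2]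
          nlinarith
      rw [hsingle, Finset.sum_singleton]
      simp only [tilde, if_pos hcond]
      have hcast : ((⌊ℓ * (v:ℝ)⌋₊ : ℕ) : ℂ) = (ℓ : ℂ) * ((v:ℕ) : ℂ) := by
        exact_mod_cast congrArg Complex.ofReal hcond.2
      have h1 : ((⌊ℓ * (v:ℝ)⌋₊ : ℕ) : ℂ) ^ (-s) = (ℓ : ℂ) ^ (-s) * ((v:ℕ) : ℂ) ^ (-s) := by
        rw [hcast]
        exact_mod_cast Complex.mul_cpow_ofReal_nonneg hℓ0.le hv0.le (-s)
      have h2 : ((v:ℕ):ℂ) ^ (-s) * ((v:ℕ):ℂ) ^ (s - δ) = ((v:ℕ):ℂ) ^ (-δ) := by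
        rw [← Complex.cpow_add _ _ hvne]
        congr 1
        ring
      rw [h1]
      linear_combination (a ⌊ℓ * (v:ℝ)⌋₊ * (ℓ:ℂ) ^ (-s) * b v) * h2
    · have hempty : (Icc 1 ⌊x⌋₊).filter (fun u : ℕ => (u:ℝ) = ℓ * (v:ℝ)) = ∅ := by
        rw [Finset.filter_eq_empty_iff]
        intro u hu h
        have heq : ⌊ℓ * (v:ℝ)⌋₊ = u := by rw [← h, Nat.floor_natCast]
        exact hcond ⟨heq ▸ (mem_Icc.mp hu).1, by rw [heq, h]⟩
      rw [hempty, Finset.sum_empty]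
      simp only [tilde, if_neg hcond]
      ring
  have hAB := Finset.sum_union_inter (s₁ := A) (s₂ := B)
    (f := fun p : ℕ × ℕ => (a p.1 * (p.1 : ℂ) ^ (-s)) * (b p.2 * (p.2 : ℂ) ^ (s - δ)))
  rw [hunion, hinter] at hAB
  rw [hAsum, hBsum]
  rw [hprod, hdiag] at hAB
  linear_combination -hAB

/-- AFE for the square of a function given an AFE for the function (Corollary 1 a). -/
theorem afe_square (s δ ψ f : ℂ) (a b : ℕ → ℂ) (T : ℝ) (hT : 0 < T) (E₁ : ℝ → ℂ)
    (hf : ∀ x : ℝ, 0 < x →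
      f = ∑ n ∈ Icc 1 ⌊x⌋₊, a n * (n : ℂ) ^ (-s)
        + ψ * ∑ n ∈ Icc 1 ⌊T / x⌋₊, b n * (n : ℂ) ^ (s - δ) + E₁ x)
    (x : ℝ) (hx : 0 < x) (y ℓ : ℝ) (hy : y = T / x) (hℓ : ℓ = x / y) :
    f ^ 2 =
      ∑ n ∈ Icc 1 ⌊x ^ 2⌋₊,
        (∑ p ∈ Nat.divisorsAntidiagonal n, a p.1 * a p.2) * (n : ℂ) ^ (-s)
      + ψ ^ 2 * ∑ n ∈ Icc 1 ⌊y ^ 2⌋₊,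
          (∑ p ∈ Nat.divisorsAntidiagonal n, b p.1 * b p.2) * (n : ℂ) ^ (s - δ)
      + (2 * (∑ n ∈ Icc 1 ⌊x⌋₊, a n * (n : ℂ) ^ (-s) * E₁ (x ^ 2 / n)
            + ψ * ∑ n ∈ Icc 1 ⌊y⌋₊, b n * (n : ℂ) ^ (s - δ) * E₁ (n * x / y)
            + ψ * (ℓ : ℂ) ^ (-s) * ∑ n ∈ Icc 1 ⌊y⌋₊, b n * tilde a (ℓ * n) * (n : ℂ) ^ (-δ))
          + E₁ x ^ 2) := by
  have hy0 : 0 < y := by rw [hy]; positivity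
  have hℓ0 : 0 < ℓ := by rw [hℓ]; positivity
  have hT0 : T ≠ 0 := ne_of_gt hT
  have hx0 : x ≠ 0 := ne_of_gt hx
  have hy0' : y ≠ 0 := ne_of_gt hy0
  have hxy : ℓ * y = x := by rw [hℓ]; field_simp
  -- the basic AFE at x
  have e1 : f = (∑ n ∈ Icc 1 ⌊x⌋₊, a n * (n : ℂ) ^ (-s))
      + ψ * (∑ n ∈ Icc 1 ⌊y⌋₊, b n * (n : ℂ) ^ (s - δ)) + E₁ x := by
    have h := hf x hx
    rw [← hy] at h
    exact h
  -- multiply the a-sum by f, expanding f at the points x²/n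
  have e2 : (∑ n ∈ Icc 1 ⌊x⌋₊, a n * (n : ℂ) ^ (-s)) * f
      = (∑ n ∈ Icc 1 ⌊x⌋₊, a n * (n : ℂ) ^ (-s)
            * ∑ m ∈ Icc 1 ⌊x ^ 2 / (n : ℝ)⌋₊, a m * (m : ℂ) ^ (-s))
        + ψ * (∑ n ∈ Icc 1 ⌊x⌋₊, a n * (n : ℂ) ^ (-s)
            * ∑ v ∈ Icc 1 ⌊(n : ℝ) / ℓ⌋₊, b v * (v : ℂ) ^ (s - δ))
        + ∑ n ∈ Icc 1 ⌊x⌋₊, a n * (n : ℂ) ^ (-s) * E₁ (x ^ 2 / n) := by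
    have key : ∀ n ∈ Icc 1 ⌊x⌋₊, a n * (n : ℂ) ^ (-s) * f
        = a n * (n : ℂ) ^ (-s) * ∑ m ∈ Icc 1 ⌊x ^ 2 / (n : ℝ)⌋₊, a m * (m : ℂ) ^ (-s)
          + ψ * (a n * (n : ℂ) ^ (-s) * ∑ v ∈ Icc 1 ⌊(n : ℝ) / ℓ⌋₊, b v * (v : ℂ) ^ (s - δ))
          + a n * (n : ℂ) ^ (-s) * E₁ (x ^ 2 / n) := by
      intro n hn
      have hn1 : (1:ℝ) ≤ n := by exact_mod_cast (mem_Icc.mp hn).1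
      have hnp : (0:ℝ) < n := by linarith
      have hpos : 0 < x ^ 2 / (n : ℝ) := by positivity
      have harg : T / (x ^ 2 / (n : ℝ)) = (n : ℝ) / ℓ := by
        rw [hℓ, hy]
        field_simp
      rw [hf _ hpos, harg]
      ring
    calc (∑ n ∈ Icc 1 ⌊x⌋₊, a n * (n : ℂ) ^ (-s)) * f
        = ∑ n ∈ Icc 1 ⌊x⌋₊, a n * (n : ℂ) ^ (-s) * f := Finset.sum_mul _ _ _
      _ = _ := Finset.sum_congr rfl key
      _ = _ := by rw [Finset.sum_add_distrib, Finset.sum_add_distrib, ← Finset.mul_sum]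
  -- multiply the b-sum by f, expanding f at the points ℓn
  have e3 : (∑ n ∈ Icc 1 ⌊y⌋₊, b n * (n : ℂ) ^ (s - δ)) * f
      = (∑ n ∈ Icc 1 ⌊y⌋₊, b n * (n : ℂ) ^ (s - δ)
            * ∑ u ∈ Icc 1 ⌊ℓ * (n : ℝ)⌋₊, a u * (u : ℂ) ^ (-s))
        + ψ * (∑ n ∈ Icc 1 ⌊y⌋₊, b n * (n : ℂ) ^ (s - δ)
            * ∑ m ∈ Icc 1 ⌊y ^ 2 / (n : ℝ)⌋₊, b m * (m : ℂ) ^ (s - δ))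
        + ∑ n ∈ Icc 1 ⌊y⌋₊, b n * (n : ℂ) ^ (s - δ) * E₁ (n * x / y) := by
    have key : ∀ n ∈ Icc 1 ⌊y⌋₊, b n * (n : ℂ) ^ (s - δ) * f
        = b n * (n : ℂ) ^ (s - δ) * ∑ u ∈ Icc 1 ⌊ℓ * (n : ℝ)⌋₊, a u * (u : ℂ) ^ (-s)
          + ψ * (b n * (n : ℂ) ^ (s - δ) * ∑ m ∈ Icc 1 ⌊y ^ 2 / (n : ℝ)⌋₊, b m * (m : ℂ) ^ (s - δ))
          + b n * (n : ℂ) ^ (s - δ) * E₁ (n * x / y) := by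
      intro n hn
      have hn1 : (1:ℝ) ≤ n := by exact_mod_cast (mem_Icc.mp hn).1
      have hnp : (0:ℝ) < n := by linarith
      have hpos : 0 < ℓ * (n : ℝ) := by positivity
      have harg : T / (ℓ * (n : ℝ)) = y ^ 2 / (n : ℝ) := by
        rw [hℓ, hy]
        field_simp
      have hEarg : ℓ * (n : ℝ) = (n : ℝ) * x / y := by
        rw [hℓ]; ring
      rw [hf _ hpos, harg, hEarg]
      ring
    calc (∑ n ∈ Icc 1 ⌊y⌋₊, b n * (n : ℂ) ^ (s - δ)) * f
        = ∑ n ∈ Icc 1 ⌊y⌋₊, b n * (n : ℂ) ^ (s - δ) * f := Finset.sum_mul _ _ _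
      _ = _ := Finset.sum_congr rfl key
      _ = _ := by rw [Finset.sum_add_distrib, Finset.sum_add_distrib, ← Finset.mul_sum]
  have e4 := hyperbola a (-s) x hx
  have e5 := hyperbola b (s - δ) y hy0
  have e6 := cross a b s δ x y ℓ hx hy0 hxy hℓ0
  linear_combination 2 * e2 + (2 * ψ) * e3 - e4 - ψ ^ 2 * e5 + (2 * ψ) * e6
    + (f - (∑ n ∈ Icc 1 ⌊x⌋₊, a n * (n : ℂ) ^ (-s))
        - ψ * (∑ n ∈ Icc 1 ⌊y⌋₊, b n * (n : ℂ) ^ (s - δ)) + E₁ x) * e1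
end

section
/- Let s, f be complex numbers, let a : ℕ → ℂ, and let E₁ : ℝ → ℂ be a function such that for every real x > 0 one has f = ∑_{n ≤ x} a(n) n^{−s} + E₁(x). Set A(n) = ∑_{uv=n} a(u)a(v). Then for every x > 0, f² = ∑_{n ≤ x²} A(n) n^{−s} + 2 ∑_{n ≤ x} a(n) n^{−s} E₁(x²/n) + E₁(x)². -/
open Finset

/-- AFE for the square of a function with no "dual" sum (Corollary 1 b). -/
theorem afe_square_simple (s f : ℂ) (a : ℕ → ℂ) (E₁ : ℝ → ℂ)
    (hf : ∀ x : ℝ, 0 < x → f = ∑ n ∈ Icc 1 ⌊x⌋₊, a n * (n : ℂ) ^ (-s) + E₁ x)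
    (x : ℝ) (hx : 0 < x) :
    f ^ 2 =
      ∑ n ∈ Icc 1 ⌊x ^ 2⌋₊,
        (∑ p ∈ Nat.divisorsAntidiagonal n, a p.1 * a p.2) * (n : ℂ) ^ (-s)
      + 2 * ∑ n ∈ Icc 1 ⌊x⌋₊, a n * (n : ℂ) ^ (-s) * E₁ (x ^ 2 / n)
      + E₁ x ^ 2 := by
  set g : ℕ → ℂ := fun n => a n * (n : ℂ) ^ (-s) with hg
  set M : ℕ := ⌊x⌋₊ with hM
  set N : ℕ := ⌊x ^ 2⌋₊ with hN
  have hx2 : (0:ℝ) ≤ x ^ 2 := sq_nonneg x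
  -- multiplicativity of g
  have hgmul : ∀ u v : ℕ, g (u * v) = g u * g v → True := fun _ _ _ => trivial
  have hmul : ∀ u v : ℕ, a u * a v * ((u * v : ℕ) : ℂ) ^ (-s) = g u * g v := by
    intro u v
    have : ((u * v : ℕ) : ℂ) ^ (-s) = (u : ℂ) ^ (-s) * (v : ℂ) ^ (-s) := by
      have := Complex.mul_cpow_ofReal_nonneg (Nat.cast_nonneg u) (Nat.cast_nonneg v) (-s)
      push_cast at this ⊢
      exact this
    rw [this, hg]; ring
  -- step 1: the antidiagonal sum as a sum over pairs
  set P : Finset (ℕ × ℕ) := (Icc 1 N ×ˢ Icc 1 N).filter (fun p => p.1 * p.2 ≤ N) with hP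
  have hmemP : ∀ p : ℕ × ℕ, p ∈ P ↔ 1 ≤ p.1 ∧ 1 ≤ p.2 ∧ p.1 * p.2 ≤ N := by
    intro p
    simp only [hP, mem_filter, mem_product, mem_Icc]
    constructor
    · rintro ⟨⟨⟨h1, _⟩, ⟨h2, _⟩⟩, h3⟩; exact ⟨h1, h2, h3⟩
    · rintro ⟨h1, h2, h3⟩
      refine ⟨⟨⟨h1, ?_⟩, ⟨h2, ?_⟩⟩, h3⟩
      · exact le_trans (Nat.le_mul_of_pos_right _ h2) h3
      · exact le_trans (Nat.le_mul_of_pos_left _ h1) h3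
  have step1 : ∑ n ∈ Icc 1 N,
      (∑ p ∈ Nat.divisorsAntidiagonal n, a p.1 * a p.2) * (n : ℂ) ^ (-s)
      = ∑ p ∈ P, g p.1 * g p.2 := by
    have hre : ∀ n ∈ Icc 1 N,
        (∑ p ∈ Nat.divisorsAntidiagonal n, a p.1 * a p.2) * (n : ℂ) ^ (-s)
        = ∑ p ∈ Nat.divisorsAntidiagonal n, g p.1 * g p.2 := by
      intro n _
      rw [Finset.sum_mul]
      refine Finset.sum_congr rfl fun p hp => ?_
      obtain ⟨hpn, _⟩ := Nat.mem_divisorsAntidiagonal.1 hp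
      rw [← hpn, hmul]
    rw [Finset.sum_congr rfl hre]
    have hdisj : (↑(Icc 1 N) : Set ℕ).PairwiseDisjoint Nat.divisorsAntidiagonal := by
      intro m _ n _ hmn
      refine Finset.disjoint_left.2 fun p hp hp' => hmn ?_
      obtain ⟨h1, _⟩ := Nat.mem_divisorsAntidiagonal.1 hp
      obtain ⟨h2, _⟩ := Nat.mem_divisorsAntidiagonal.1 hp'
      rw [← h1, h2]
    rw [← Finset.sum_biUnion hdisj]
    congr 1
    ext p
    simp only [Finset.mem_biUnion, Nat.mem_divisorsAntidiagonal, mem_Icc, hmemP]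
    constructor
    · rintro ⟨n, ⟨hn1, hn2⟩, hpn, _⟩
      refine ⟨Nat.one_le_iff_ne_zero.2 fun h => ?_, Nat.one_le_iff_ne_zero.2 fun h => ?_, by omega⟩
      · rw [h, zero_mul] at hpn; omega
      · rw [h, mul_zero] at hpn; omega
    · rintro ⟨h1, h2, h3⟩
      exact ⟨p.1 * p.2, ⟨Nat.one_le_iff_ne_zero.2 (by positivity), h3⟩, rfl, by positivity⟩
  -- hyperbola decomposition
  set A : Finset (ℕ × ℕ) := P.filter (fun p => p.1 ≤ M) with hA
  set B : Finset (ℕ × ℕ) := P.filter (fun p => p.2 ≤ M) with hB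
  have hMx : (M : ℝ) ≤ x := Nat.floor_le hx.le
  have hcover : A ∪ B = P := by
    ext p
    simp only [hA, hB, Finset.mem_union, mem_filter]
    constructor
    · rintro (⟨h, _⟩ | ⟨h, _⟩) <;> exact h
    · intro hp
      by_contra hc
      push_neg at hc
      obtain ⟨h1, h2⟩ := hc
      have hp1 : M < p.1 := h1 hp
      have hp2 : M < p.2 := h2 hp
      have hx1 : x < (p.1 : ℝ) := lt_of_lt_of_le (Nat.lt_succ_floor x) (by exact_mod_cast hp1)
      have hx2' : x < (p.2 : ℝ) := lt_of_lt_of_le (Nat.lt_succ_floor x) (by exact_mod_cast hp2)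
      have hub : p.1 * p.2 ≤ N := ((hmemP p).1 hp).2.2
      have : ((p.1 * p.2 : ℕ) : ℝ) ≤ x ^ 2 := (Nat.le_floor_iff hx2).1 hub
      push_cast at this
      nlinarith
  have hinter : A ∩ B = Icc 1 M ×ˢ Icc 1 M := by
    ext p
    simp only [hA, hB, Finset.mem_inter, mem_filter, mem_product, mem_Icc, hmemP]
    constructor
    · rintro ⟨⟨⟨h1, h2, _⟩, h4⟩, ⟨_, h5⟩⟩; exact ⟨⟨h1, h4⟩, h2, h5⟩
    · rintro ⟨⟨h1, h2⟩, h3, h4⟩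
      have : p.1 * p.2 ≤ N := by
        have : ((p.1 * p.2 : ℕ) : ℝ) ≤ x ^ 2 := by
          push_cast
          have e1 : (p.1 : ℝ) ≤ x := le_trans (by exact_mod_cast h2) hMx
          have e2 : (p.2 : ℝ) ≤ x := le_trans (by exact_mod_cast h4) hMx
          have : (p.1 : ℝ) * p.2 ≤ x * x := by
            apply mul_le_mul e1 e2 (by positivity) hx.le
          nlinarith
        exact (Nat.le_floor_iff hx2).2 (by exact_mod_cast this)
      exact ⟨⟨⟨h1, h3, this⟩, h2⟩, ⟨h1, h3, this⟩, h4⟩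
  -- A-sum evaluated
  have hAeq : A = (Icc 1 M ×ˢ Icc 1 N).filter (fun p => p.1 * p.2 ≤ N) := by
    ext p
    simp only [hA, mem_filter, mem_product, mem_Icc, hmemP]
    constructor
    · rintro ⟨⟨h1, h2, h3⟩, h4⟩
      exact ⟨⟨⟨h1, h4⟩, h2, le_trans (Nat.le_mul_of_pos_left _ h1) h3⟩, h3⟩
    · rintro ⟨⟨⟨h1, h4⟩, h2, _⟩, h3⟩
      exact ⟨⟨h1, h2, h3⟩, h4⟩
  have hinner : ∀ u ∈ Icc 1 M, (Icc 1 N).filter (fun v => u * v ≤ N) = Icc 1 ⌊x ^ 2 / (u:ℝ)⌋₊ := by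
    intro u hu
    obtain ⟨hu1, _⟩ := mem_Icc.1 hu
    have hu0 : (0:ℝ) < u := by exact_mod_cast hu1
    ext v
    simp only [mem_filter, mem_Icc]
    have key : u * v ≤ N ↔ v ≤ ⌊x ^ 2 / (u:ℝ)⌋₊ := by
      rw [Nat.le_floor_iff hx2, Nat.le_floor_iff (by positivity), le_div_iff₀ hu0]
      push_cast
      constructor <;> intro h <;> nlinarith
    constructor
    · rintro ⟨⟨h1, _⟩, h3⟩; exact ⟨h1, key.1 h3⟩
    · rintro ⟨h1, h2⟩
      have h3 : u * v ≤ N := key.2 h2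
      exact ⟨⟨h1, le_trans (Nat.le_mul_of_pos_left _ hu1) h3⟩, h3⟩
  have hAsum : ∑ p ∈ A, g p.1 * g p.2
      = ∑ u ∈ Icc 1 M, g u * ∑ v ∈ Icc 1 ⌊x ^ 2 / (u:ℝ)⌋₊, g v := by
    rw [hAeq, Finset.sum_filter, Finset.sum_product]
    refine Finset.sum_congr rfl fun u hu => ?_
    rw [Finset.mul_sum, ← hinner u hu, Finset.sum_filter]
  -- B-sum equals A-sum by symmetry
  have hBsum : ∑ p ∈ B, g p.1 * g p.2 = ∑ p ∈ A, g p.1 * g p.2 := by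
    refine Finset.sum_nbij' (fun p => p.swap) (fun p => p.swap) ?_ ?_ ?_ ?_ ?_
    · intro p hp
      simp only [hB, mem_filter, hmemP] at hp
      simp only [hA, mem_filter, hmemP, Prod.fst_swap, Prod.snd_swap]
      exact ⟨⟨hp.1.2.1, hp.1.1, by rw [mul_comm]; exact hp.1.2.2⟩, hp.2⟩
    · intro p hp
      simp only [hA, mem_filter, hmemP] at hp
      simp only [hB, mem_filter, hmemP, Prod.fst_swap, Prod.snd_swap]
      exact ⟨⟨hp.1.2.1, hp.1.1, by rw [mul_comm]; exact hp.1.2.2⟩, hp.2⟩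
    · intro p _; exact Prod.swap_swap p
    · intro p _; exact Prod.swap_swap p
    · intro p _; simp [mul_comm]
  -- evaluate the inner sums using hf
  have hS : ∀ y : ℝ, 0 < y → ∑ n ∈ Icc 1 ⌊y⌋₊, g n = f - E₁ y := by
    intro y hy
    have := hf y hy
    rw [hg]
    linear_combination -this
  have hAval : ∑ p ∈ A, g p.1 * g p.2
      = ∑ u ∈ Icc 1 M, g u * (f - E₁ (x ^ 2 / (u:ℝ))) := by
    rw [hAsum]
    refine Finset.sum_congr rfl fun u hu => ?_
    obtain ⟨hu1, _⟩ := mem_Icc.1 hu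
    have hu0 : (0:ℝ) < u := by exact_mod_cast hu1
    rw [hS (x ^ 2 / (u:ℝ)) (by positivity)]
  have hsq : ∑ p ∈ Icc 1 M ×ˢ Icc 1 M, g p.1 * g p.2
      = (f - E₁ x) * (f - E₁ x) := by
    rw [Finset.sum_product, ← Finset.sum_mul_sum, hS x hx]
  -- put it together
  have hfx := hf x hx
  have hPsum : ∑ p ∈ P, g p.1 * g p.2
      = 2 * ∑ u ∈ Icc 1 M, g u * (f - E₁ (x ^ 2 / (u:ℝ))) - (f - E₁ x) * (f - E₁ x) := by
    have h := Finset.sum_union_inter (s₁ := A) (s₂ := B) (f := fun p => g p.1 * g p.2)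
    rw [hcover, hinter, hAval] at h
    rw [hBsum, hAval] at h
    rw [hsq] at h
    linear_combination h
  have hsplit : ∑ u ∈ Icc 1 M, g u * (f - E₁ (x ^ 2 / (u:ℝ)))
      = (f - E₁ x) * f - ∑ u ∈ Icc 1 M, g u * E₁ (x ^ 2 / (u:ℝ)) := by
    simp only [mul_sub]
    rw [Finset.sum_sub_distrib, ← Finset.sum_mul, hS x hx]
  rw [step1, hPsum, hsplit]
  simp only [hg]
  ring
end

section
/- Let s be a real number with s > 0 and s ≠ 1, and define E₁(s,x) := ζ(s) − ∑_{n ≤ x} n^{−s} for real x > 0. Then for every real X > 0, ζ(s)² = ∑_{n ≤ X} d(n) n^{−s} + 2 ∑_{n ≤ √X} n^{−s} E₁(s, X/n) + E₁(s, √X)². -/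
open Finset

/-- The Dirichlet hyperbola identity for a function `f : ℕ → ℂ` that is
"multiplicative" on all pairs. -/
theorem hyperbola_aux (f : ℕ → ℂ) (hfmul : ∀ a b : ℕ, f (a * b) = f a * f b)
    (X : ℝ) (hX : 0 < X) :
    ∑ n ∈ Icc 1 ⌊X⌋₊, (n.divisors.card : ℂ) * f n =
      2 * ∑ n ∈ Icc 1 ⌊Real.sqrt X⌋₊, f n * ∑ m ∈ Icc 1 ⌊X / (n : ℝ)⌋₊, f m
      - (∑ n ∈ Icc 1 ⌊Real.sqrt X⌋₊, f n) ^ 2 := by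
  set N := ⌊X⌋₊ with hN
  set M := ⌊Real.sqrt X⌋₊ with hM
  have hNX : (N : ℝ) ≤ X := Nat.floor_le hX.le
  have hMX : (M : ℝ) ≤ Real.sqrt X := Nat.floor_le (Real.sqrt_nonneg X)
  have hXM : Real.sqrt X < (M : ℝ) + 1 := Nat.lt_floor_add_one _
  have hsq : Real.sqrt X * Real.sqrt X = X := Real.mul_self_sqrt hX.le
  have hMMN : M * M ≤ N := by
    rw [hN]
    apply Nat.le_floor
    push_cast
    calc ((M : ℝ)) * M ≤ Real.sqrt X * Real.sqrt X :=
          mul_le_mul hMX hMX (by positivity) (Real.sqrt_nonneg X)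
      _ = X := hsq
  -- division criterion
  have hdiv : ∀ a m : ℕ, 1 ≤ a → (a * m ≤ N ↔ m ≤ ⌊X / (a : ℝ)⌋₊) := by
    intro a m ha
    have ha' : (0 : ℝ) < a := by exact_mod_cast ha
    rw [hN, Nat.le_floor_iff hX.le, Nat.le_floor_iff (by positivity), le_div_iff₀ ha']
    push_cast
    rw [mul_comm]
  -- the hyperbola condition
  have hsplit : ∀ a b : ℕ, 1 ≤ a → 1 ≤ b → a * b ≤ N → a ≤ M ∨ b ≤ M := by
    intro a b ha hb hab
    by_contra h
    push_neg at h
    obtain ⟨h1, h2⟩ := h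
    have h1' : (M : ℝ) + 1 ≤ a := by exact_mod_cast h1
    have h2' : (M : ℝ) + 1 ≤ b := by exact_mod_cast h2
    have hab' : (a : ℝ) * b ≤ X := by
      calc ((a : ℝ) * b) = ((a * b : ℕ) : ℝ) := by push_cast; ring
        _ ≤ (N : ℝ) := by exact_mod_cast hab
        _ ≤ X := hNX
    nlinarith [Real.sqrt_nonneg X]
  set T : Finset (ℕ × ℕ) :=
    (Icc 1 N ×ˢ Icc 1 N).filter (fun p => p.1 * p.2 ≤ N) with hT
  have hmemT : ∀ p : ℕ × ℕ, p ∈ T ↔ 1 ≤ p.1 ∧ 1 ≤ p.2 ∧ p.1 * p.2 ≤ N := by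
    intro p
    simp only [hT, mem_filter, mem_product, mem_Icc]
    constructor
    · rintro ⟨⟨⟨h1, _⟩, ⟨h3, _⟩⟩, h5⟩; exact ⟨h1, h3, h5⟩
    · rintro ⟨h1, h2, h3⟩
      refine ⟨⟨⟨h1, ?_⟩, ⟨h2, ?_⟩⟩, h3⟩
      · calc p.1 ≤ p.1 * p.2 := Nat.le_mul_of_pos_right _ h2
          _ ≤ N := h3
      · calc p.2 ≤ p.1 * p.2 := Nat.le_mul_of_pos_left _ h1
          _ ≤ N := h3
  -- step 1: the divisor sum equals a sum over T
  have step1 : ∑ n ∈ Icc 1 N, (n.divisors.card : ℂ) * f n = ∑ p ∈ T, f p.1 * f p.2 := by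
    have hbU : T = (Icc 1 N).biUnion (fun n => n.divisorsAntidiagonal) := by
      ext p
      simp only [mem_biUnion, Nat.mem_divisorsAntidiagonal, mem_Icc, hmemT]
      constructor
      · rintro ⟨h1, h2, h3⟩
        exact ⟨p.1 * p.2, ⟨Nat.one_le_iff_ne_zero.2 (by positivity), h3⟩, rfl,
          by positivity⟩
      · rintro ⟨n, ⟨hn1, hn2⟩, rfl, hn0⟩
        have hp1 : 1 ≤ p.1 := Nat.one_le_iff_ne_zero.2 (by
          intro h0; rw [h0] at hn1; simp at hn1)
        have hp2 : 1 ≤ p.2 := Nat.one_le_iff_ne_zero.2 (by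
          intro h0; rw [h0] at hn1; simp at hn1)
        exact ⟨hp1, hp2, hn2⟩
    rw [hbU, Finset.sum_biUnion]
    · apply Finset.sum_congr rfl
      intro n hn
      rw [mem_Icc] at hn
      have hall : ∀ p ∈ n.divisorsAntidiagonal, f p.1 * f p.2 = f n := by
        intro p hp
        rw [Nat.mem_divisorsAntidiagonal] at hp
        rw [← hfmul, hp.1]
      rw [Finset.sum_congr rfl hall, Finset.sum_const]
      have hcard : n.divisorsAntidiagonal.card = n.divisors.card := by
        rw [← Nat.map_div_right_divisors, Finset.card_map]
      rw [hcard, nsmul_eq_mul]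
    · intro a _ b _ hab
      simp only [Function.onFun]
      rw [Finset.disjoint_left]
      intro p hpa hpb
      rw [Nat.mem_divisorsAntidiagonal] at hpa hpb
      exact hab (hpa.1.symm.trans hpb.1)
  set T1 := T.filter (fun p => p.1 ≤ M) with hT1
  set T2 := T.filter (fun p => p.2 ≤ M) with hT2
  -- step 2: T1 sum
  have step2 : ∑ p ∈ T1, f p.1 * f p.2
      = ∑ n ∈ Icc 1 M, f n * ∑ m ∈ Icc 1 ⌊X / (n : ℝ)⌋₊, f m := by
    have hbU : T1 = (Icc 1 M).biUnion (fun a => {a} ×ˢ Icc 1 ⌊X / (a : ℝ)⌋₊) := by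
      ext p
      simp only [hT1, mem_filter, mem_biUnion, mem_product, mem_singleton, mem_Icc, hmemT]
      constructor
      · rintro ⟨⟨h1, h2, h3⟩, h4⟩
        exact ⟨p.1, ⟨h1, h4⟩, rfl, h2, (hdiv p.1 p.2 h1).1 h3⟩
      · rintro ⟨a, ⟨ha1, ha2⟩, rfl, hm1, hm2⟩
        exact ⟨⟨ha1, hm1, (hdiv p.1 p.2 ha1).2 hm2⟩, ha2⟩
    rw [hbU, Finset.sum_biUnion]
    · apply Finset.sum_congr rfl
      intro a _
      rw [Finset.sum_product, Finset.sum_singleton, Finset.mul_sum]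
    · intro a _ b _ hab
      simp only [Function.onFun]
      rw [Finset.disjoint_left]
      intro p hpa hpb
      rw [Finset.mem_product, Finset.mem_singleton] at hpa hpb
      exact hab (hpa.1.symm.trans hpb.1)
  -- step 3: T2 sum equals T1 sum by swapping
  have step3 : ∑ p ∈ T2, f p.1 * f p.2 = ∑ p ∈ T1, f p.1 * f p.2 := by
    apply Finset.sum_nbij' (fun p => Prod.swap p) (fun p => Prod.swap p)
    · intro p hp
      simp only [hT1, hT2, mem_filter, hmemT] at hp ⊢
      obtain ⟨⟨h1, h2, h3⟩, h4⟩ := hp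
      exact ⟨⟨h2, h1, by rwa [mul_comm] at h3⟩, h4⟩
    · intro p hp
      simp only [hT1, hT2, mem_filter, hmemT] at hp ⊢
      obtain ⟨⟨h1, h2, h3⟩, h4⟩ := hp
      exact ⟨⟨h2, h1, by rwa [mul_comm] at h3⟩, h4⟩
    · intro p _; simp
    · intro p _; simp
    · intro p _; simp [mul_comm]
  -- step 4: intersection
  have hinter : T1 ∩ T2 = Icc 1 M ×ˢ Icc 1 M := by
    ext p
    simp only [hT1, hT2, mem_inter, mem_filter, mem_product, mem_Icc, hmemT]
    constructor
    · rintro ⟨⟨⟨h1, h2, _⟩, h4⟩, ⟨_, h5⟩⟩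
      exact ⟨⟨h1, h4⟩, h2, h5⟩
    · rintro ⟨⟨h1, h2⟩, h3, h4⟩
      have hab : p.1 * p.2 ≤ N := le_trans (Nat.mul_le_mul h2 h4) hMMN
      exact ⟨⟨⟨h1, h3, hab⟩, h2⟩, ⟨h1, h3, hab⟩, h4⟩
  have hunion : T1 ∪ T2 = T := by
    rw [hT1, hT2, ← Finset.filter_or]
    apply Finset.filter_true_of_mem
    intro p hp
    rw [hmemT] at hp
    exact hsplit p.1 p.2 hp.1 hp.2.1 hp.2.2
  have hinter_sum : ∑ p ∈ Icc 1 M ×ˢ Icc 1 M, f p.1 * f p.2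
      = (∑ n ∈ Icc 1 M, f n) ^ 2 := by
    rw [Finset.sum_product, sq, Finset.sum_mul]
    apply Finset.sum_congr rfl
    intro a _
    rw [Finset.mul_sum]
  have key := Finset.sum_union_inter (s₁ := T1) (s₂ := T2) (f := fun p => f p.1 * f p.2)
  rw [hunion, hinter, hinter_sum, step3, step2] at key
  rw [step1]
  linear_combination key

/-- AFE for `ζ(s)²` for real `s > 0`, `s ≠ 1`, in terms of the remainder term `E₁`
of the AFE for `ζ(s)`. -/
theorem zeta_sq_real_afe (s : ℝ) (hs : 0 < s) (hs1 : s ≠ 1)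
    (E₁ : ℝ → ℂ)
    (hE₁ : ∀ x : ℝ, 0 < x → E₁ x = riemannZeta s - ∑ n ∈ Icc 1 ⌊x⌋₊, (n : ℂ) ^ (-(s : ℂ)))
    (X : ℝ) (hX : 0 < X) :
    riemannZeta s ^ 2 =
      ∑ n ∈ Icc 1 ⌊X⌋₊, (n.divisors.card : ℂ) * (n : ℂ) ^ (-(s : ℂ))
      + 2 * ∑ n ∈ Icc 1 ⌊Real.sqrt X⌋₊, (n : ℂ) ^ (-(s : ℂ)) * E₁ (X / n)
      + E₁ (Real.sqrt X) ^ 2 := by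
  set f : ℕ → ℂ := fun n => (n : ℂ) ^ (-(s : ℂ)) with hf
  have hfmul : ∀ a b : ℕ, f (a * b) = f a * f b := by
    intro a b
    simp only [hf]
    push_cast
    exact Complex.natCast_mul_natCast_cpow a b _
  have key := hyperbola_aux f hfmul X hX
  have hEsqrt : E₁ (Real.sqrt X) = riemannZeta s - ∑ n ∈ Icc 1 ⌊Real.sqrt X⌋₊, f n :=
    hE₁ (Real.sqrt X) (Real.sqrt_pos.2 hX)
  have hEsum : ∑ n ∈ Icc 1 ⌊Real.sqrt X⌋₊, f n * E₁ (X / n)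
      = riemannZeta s * (∑ n ∈ Icc 1 ⌊Real.sqrt X⌋₊, f n)
        - ∑ n ∈ Icc 1 ⌊Real.sqrt X⌋₊, f n * ∑ m ∈ Icc 1 ⌊X / (n : ℝ)⌋₊, f m := by
    rw [Finset.mul_sum, ← Finset.sum_sub_distrib]
    apply Finset.sum_congr rfl
    intro n hn
    rw [mem_Icc] at hn
    have hn' : (0 : ℝ) < n := by exact_mod_cast hn.1
    rw [hE₁ (X / n) (by positivity), mul_sub, mul_comm (f n) (riemannZeta s)]
  rw [hEsum, hEsqrt]
  rw [key]
  ring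
end

section
/- Let s be a real number with s > 0 and s ≠ 1, let 0 < α ≤ 1, and let x > 0 be real. Then ζ(s,α) = ∑_{0 ≤ n ≤ x−α} (n+α)^{−s} + x^{1−s}/(s−1) + ψ(x−α) x^{−s} − s ∫_x^∞ ψ(u−α) u^{−s−1} du, where the sum runs over integers n ≥ 0 with n ≤ x−α. -/
open Finset

/-- The sawtooth function `ψ(u) = u − ⌊u⌋ − 1/2`. -/
noncomputable def sawtooth (u : ℝ) : ℝ := u - ⌊u⌋ - 1 / 2

section HurwitzAFEAux

open Set MeasureTheory Filter Topology

lemma sawtooth_abs_le (u : ℝ) : |sawtooth u| ≤ 1 / 2 := by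
  have h1 := Int.floor_le u
  have h2 := Int.lt_floor_add_one u
  rw [abs_le]
  constructor <;> simp only [sawtooth] <;> linarith

lemma measurable_sawtooth : Measurable sawtooth := by
  have : sawtooth = fun u => Int.fract u - 1 / 2 := by
    funext u; rw [Int.fract, sawtooth]
  rw [this]
  exact measurable_fract.sub measurable_const

lemma integral_Ioi_rpow'' {c p : ℝ} (hp : p < -1) (hc : 0 < c) :
    ∫ u in Ioi c, u ^ p = c ^ (p + 1) / (-(p + 1)) := by
  rw [integral_Ioi_rpow_of_lt hp hc, div_neg, neg_div]

lemma integrableOn_log_rpow {x p : ℝ} (hx : 0 < x) (hp : p < -1) :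
    IntegrableOn (fun u => |Real.log u| * u ^ p) (Ioi x) := by
  set e : ℝ := (-1 - p) / 2 with he
  have he0 : 0 < e := by simp only [he]; linarith
  have hpe : p + e < -1 := by simp only [he]; linarith
  have hint : IntegrableOn (fun u => |Real.log x| * u ^ p + e⁻¹ * u ^ (p + e)) (Ioi x) :=
    ((integrableOn_Ioi_rpow_of_lt hp hx).const_mul _).add
      ((integrableOn_Ioi_rpow_of_lt hpe hx).const_mul _)
  refine hint.mono' ?_ ?_
  · exact ((Real.measurable_log.abs).mul (measurable_id.pow measurable_const)).aestronglyMeasurable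
  · filter_upwards [ae_restrict_mem measurableSet_Ioi] with u hu
    have hu0 : (0:ℝ) < u := hx.trans hu
    have hup : (0:ℝ) ≤ u ^ p := Real.rpow_nonneg hu0.le p
    rw [Real.norm_of_nonneg (mul_nonneg (abs_nonneg _) hup)]
    rcases le_or_gt 1 u with h1 | h1
    · have hlog : |Real.log u| = Real.log u := abs_of_nonneg (Real.log_nonneg h1)
      have hle : Real.log u ≤ e⁻¹ * u ^ e := by
        rw [inv_mul_eq_div]
        calc Real.log u ≤ u ^ e / e := Real.log_le_rpow_div hu0.le he0
        _ = u ^ e / e := rfl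
      have hA : |Real.log u| * u ^ p ≤ e⁻¹ * u ^ e * u ^ p := by
        rw [hlog]; exact mul_le_mul_of_nonneg_right hle hup
      have heq : e⁻¹ * u ^ e * u ^ p = e⁻¹ * u ^ (p + e) := by
        rw [mul_assoc, ← Real.rpow_add hu0, add_comm]
      have hB : (0:ℝ) ≤ |Real.log x| * u ^ p := mul_nonneg (abs_nonneg _) hup
      linarith
    · have hlogu : Real.log u < 0 := Real.log_neg hu0 h1
      have hlogx : Real.log x ≤ Real.log u := Real.log_le_log hx (le_of_lt hu)
      have h2 : |Real.log u| ≤ |Real.log x| := by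
        rw [abs_of_neg hlogu, abs_of_neg (lt_of_le_of_lt hlogx hlogu)]
        linarith
      have : |Real.log u| * u ^ p ≤ |Real.log x| * u ^ p :=
        mul_le_mul_of_nonneg_right h2 hup
      have h3 : (0:ℝ) ≤ e⁻¹ * u ^ (p + e) :=
        mul_nonneg (inv_nonneg.mpr he0.le) (Real.rpow_nonneg hu0.le _)
      linarith

lemma integrableOn_sawtooth_rpow (α : ℝ) {x p : ℝ} (hx : 0 < x) (hp : p < -1) :
    IntegrableOn (fun u => sawtooth (u - α) * u ^ p) (Ioi x) := by
  refine (integrableOn_Ioi_rpow_of_lt hp hx).mono' ?_ ?_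
  · exact ((measurable_sawtooth.comp (measurable_id.sub measurable_const)).mul
      (measurable_id.pow measurable_const)).aestronglyMeasurable
  · filter_upwards [ae_restrict_mem measurableSet_Ioi] with u hu
    have hu0 : (0:ℝ) < u := hx.trans hu
    have hup : (0:ℝ) ≤ u ^ p := Real.rpow_nonneg hu0.le p
    rw [norm_mul, Real.norm_of_nonneg hup, Real.norm_eq_abs]
    calc |sawtooth (u - α)| * u ^ p ≤ 1 * u ^ p := by
          exact mul_le_mul_of_nonneg_right ((sawtooth_abs_le _).trans (by norm_num)) hup
      _ = u ^ p := one_mul _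

lemma integrableOn_sawtooth_cpow (α : ℝ) {x : ℝ} (hx : 0 < x) {w : ℂ} (hw : w.re < -1) :
    IntegrableOn (fun u : ℝ => (sawtooth (u - α) : ℂ) * (u : ℂ) ^ w) (Ioi x) := by
  refine (integrableOn_Ioi_rpow_of_lt hw hx).mono' ?_ ?_
  · exact ((Complex.measurable_ofReal.comp
      (measurable_sawtooth.comp (measurable_id.sub measurable_const))).mul
      ((Complex.measurable_ofReal.comp measurable_id).pow measurable_const)).aestronglyMeasurable
  · filter_upwards [ae_restrict_mem measurableSet_Ioi] with u hu
    have hu0 : (0:ℝ) < u := hx.trans hu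
    have hup : (0:ℝ) ≤ u ^ w.re := Real.rpow_nonneg hu0.le _
    rw [norm_mul, Complex.norm_real,
      Complex.norm_cpow_eq_rpow_re_of_pos hu0, Real.norm_eq_abs]
    calc |sawtooth (u - α)| * u ^ w.re ≤ 1 * u ^ w.re :=
          mul_le_mul_of_nonneg_right ((sawtooth_abs_le _).trans (by norm_num)) hup
      _ = u ^ w.re := one_mul _

lemma integral_Ioi_rpow_pos {c p : ℝ} (hp : 1 < p) (hc : 0 < c) :
    ∫ u in Ioi c, u ^ (-p) = c ^ (1 - p) / (p - 1) := by
  rw [integral_Ioi_rpow_of_lt (by linarith) hc]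
  rw [show -p + 1 = 1 - p by ring, neg_div, ← div_neg, neg_sub]

lemma tail_repr {s α x : ℝ} (hs : 1 < s) (hα0 : 0 < α) (hα1 : α ≤ 1) (hx : 0 < x)
    (hsum : Summable (fun n : ℕ => ((n : ℝ) + α) ^ (-s))) :
    ∑' n : ℕ, ((n : ℝ) + α) ^ (-s) =
      ∑ n ∈ Finset.Icc (0 : ℤ) ⌊x - α⌋, ((n : ℝ) + α) ^ (-s) + x ^ (1 - s) / (s - 1)
      + sawtooth (x - α) * x ^ (-s)
      - s * ∫ u in Ioi x, sawtooth (u - α) / u ^ (s + 1) := by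
  have hs0 : (0:ℝ) < s := lt_trans one_pos hs
  set m : ℤ := ⌊x - α⌋ with hmdef
  have hm : -1 ≤ m := by
    rw [hmdef, Int.le_floor]; push_cast; linarith
  set N : ℕ := (m + 1).toNat with hNdef
  have hNZ : (N : ℤ) = m + 1 := Int.toNat_of_nonneg (by omega)
  have hNR : (N : ℝ) = (m : ℝ) + 1 := by exact_mod_cast congrArg (Int.cast : ℤ → ℝ) hNZ
  have hxm : x - α < m + 1 := by
    have := Int.lt_floor_add_one (x - α); push_cast at this ⊢; rw [← hmdef] at this; linarith
  have hxN : x < N + α := by rw [hNR]; linarith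
  -- partial sum identification
  have hP : ∑ i ∈ Finset.range N, ((i : ℝ) + α) ^ (-s)
      = ∑ n ∈ Finset.Icc (0 : ℤ) m, ((n : ℝ) + α) ^ (-s) := by
    have hmap : Finset.Icc (0 : ℤ) m
        = Finset.map ⟨(fun i : ℕ => (i : ℤ)), fun a b h => by simpa using h⟩
            (Finset.range N) := by
      ext n
      simp only [Finset.mem_Icc, Finset.mem_map, Finset.mem_range, Function.Embedding.coeFn_mk]
      constructor
      · rintro ⟨h1, h2⟩
        exact ⟨n.toNat, by omega, by change ((n.toNat : ℕ) : ℤ) = n; omega⟩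
      · rintro ⟨a, ha, rfl⟩
        change 0 ≤ (a:ℤ) ∧ (a:ℤ) ≤ m
        omega
    rw [hmap, Finset.sum_map]
    refine Finset.sum_congr rfl fun i _ => ?_
    change _ = (((i:ℤ):ℝ) + α) ^ (-s)
    norm_num
  -- the tail setup
  set c : ℕ → ℝ := fun i => (i : ℝ) + N + α with hcdef
  have hcx : ∀ i : ℕ, x < c i := by
    intro i
    have h0 : (0:ℝ) ≤ (i : ℝ) := Nat.cast_nonneg i
    rw [hcdef]; simp only []; linarith
  have hc0 : ∀ i : ℕ, 0 < c i := fun i => hx.trans (hcx i)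
  have h2 : ∀ i : ℕ, (((i + N : ℕ) : ℝ) + α) = c i := by
    intro i; rw [hcdef]; push_cast; ring
  set F : ℕ → ℝ → ℝ := fun i => (Ioi (c i)).indicator (fun u => u ^ (-s - 1)) with hFdef
  have hgI : ∀ i : ℕ, ∫ u in Ioi (c i), u ^ (-s - 1) = (c i) ^ (-s) / s := by
    intro i
    rw [integral_Ioi_rpow_of_lt (by linarith) (hc0 i), show -s - 1 + 1 = -s by ring,
      neg_div_neg_eq]
  have hFint : ∀ i : ℕ, Integrable (F i) (volume.restrict (Ioi x)) := by
    intro i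
    rw [hFdef, integrable_indicator_iff measurableSet_Ioi, IntegrableOn,
      Measure.restrict_restrict measurableSet_Ioi,
      inter_eq_self_of_subset_left (Ioi_subset_Ioi (hcx i).le)]
    exact integrableOn_Ioi_rpow_of_lt (by linarith) (hc0 i)
  have hFval : ∀ i : ℕ, ∫ u in Ioi x, F i u = (c i) ^ (-s) / s := by
    intro i
    rw [hFdef]
    rw [integral_indicator measurableSet_Ioi, Measure.restrict_restrict measurableSet_Ioi,
      inter_eq_self_of_subset_left (Ioi_subset_Ioi (hcx i).le)]
    exact hgI i
  have hFnn : ∀ (i : ℕ) (u : ℝ), 0 ≤ F i u := by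
    intro i u
    refine indicator_nonneg (fun t ht => ?_) u
    exact Real.rpow_nonneg (le_of_lt ((hc0 i).trans ht)) _
  have hFnorm : ∀ i : ℕ, ∫ u in Ioi x, ‖F i u‖ = (c i) ^ (-s) / s := by
    intro i
    rw [← hFval i]
    exact integral_congr_ae (Eventually.of_forall fun u => Real.norm_of_nonneg (hFnn i u))
  have hsum2 : Summable (fun i : ℕ => (c i) ^ (-s) / s) := by
    have h1 : Summable (fun i : ℕ => (((i + N : ℕ) : ℝ) + α) ^ (-s)) :=
      (summable_nat_add_iff N).mpr hsum
    exact ((summable_congr fun i => by rw [h2 i]).mp h1).div_const s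
  have hFsum : Summable fun i : ℕ => ∫ u in Ioi x, ‖F i u‖ := by
    exact (summable_congr fun i => by rw [hFnorm i]).mpr hsum2
  have hswap := MeasureTheory.integral_tsum_of_summable_integral_norm hFint hFsum
  -- identify the tsum of indicators
  have hbad : ∀ᵐ u : ℝ ∂volume.restrict (Ioi x), u ∉ range c :=
    ae_mono Measure.restrict_le_self
      (measure_eq_zero_iff_ae_notMem.mp ((countable_range c).measure_zero volume))
  have htsum_eq : ∀ᵐ u ∂volume.restrict (Ioi x),
      (∑' i, F i u) = (((⌊u - α⌋ : ℤ) : ℝ) - m) * u ^ (-s - 1) := by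
    filter_upwards [ae_restrict_mem measurableSet_Ioi, hbad] with u hu hub
    have hu0 : 0 < u := hx.trans hu
    have hfloor : m ≤ ⌊u - α⌋ := by
      rw [hmdef]
      exact Int.floor_le_floor (by have := mem_Ioi.mp hu; linarith)
    set K : ℕ := (⌊u - α⌋ - m).toNat with hKdef
    have hKZ : (K : ℤ) = ⌊u - α⌋ - m := Int.toNat_of_nonneg (by omega)
    have hcrit : ∀ i : ℕ, c i < u ↔ i < K := by
      intro i
      have hne : c i ≠ u := fun h => hub ⟨i, h⟩
      constructor
      · intro h
        have h1 : ((i + N : ℤ) : ℝ) ≤ u - α := by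
          rw [hcdef] at h; push_cast; simp only [] at h; linarith
        have h2' : (i + N : ℤ) ≤ ⌊u - α⌋ := Int.le_floor.mpr h1
        omega
      · intro h
        have h2' : (i + N : ℤ) ≤ ⌊u - α⌋ := by omega
        have h1 : ((i + N : ℤ) : ℝ) ≤ u - α := (Int.le_floor.mp h2').trans_eq rfl
        have h3 : c i ≤ u := by rw [hcdef]; push_cast at h1 ⊢; linarith
        exact lt_of_le_of_ne h3 hne
    have hFeq : ∀ i : ℕ, F i u = if i < K then u ^ (-s - 1) else 0 := by
      intro i
      rw [hFdef]
      by_cases h : i < K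
      · rw [if_pos h]
        exact indicator_of_mem (Set.mem_Ioi.mpr ((hcrit i).mpr h)) _
      · rw [if_neg h]
        exact indicator_of_notMem (fun hmem => h ((hcrit i).mp hmem)) _
    calc (∑' i, F i u) = ∑ i ∈ Finset.range K, F i u := by
          refine tsum_eq_sum fun i hi => ?_
          rw [hFeq i, if_neg (by simpa using hi)]
      _ = ∑ i ∈ Finset.range K, u ^ (-s - 1) := by
          refine Finset.sum_congr rfl fun i hi => ?_
          rw [hFeq i, if_pos (Finset.mem_range.mp hi)]
      _ = (K : ℝ) * u ^ (-s - 1) := by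
          rw [Finset.sum_const, Finset.card_range, nsmul_eq_mul]
      _ = (((⌊u - α⌋ : ℤ) : ℝ) - m) * u ^ (-s - 1) := by
          congr 1
          exact_mod_cast congrArg (Int.cast : ℤ → ℝ) hKZ
  have hint1 : ∫ u in Ioi x, (∑' i, F i u)
      = ∫ u in Ioi x, ((((⌊u - α⌋ : ℤ) : ℝ) - m) * u ^ (-s - 1)) :=
    integral_congr_ae htsum_eq
  -- integrability facts
  have I1 : IntegrableOn (fun u : ℝ => u ^ (-s)) (Ioi x) :=
    integrableOn_Ioi_rpow_of_lt (by linarith) hx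
  have I2 : IntegrableOn (fun u : ℝ => u ^ (-s - 1)) (Ioi x) :=
    integrableOn_Ioi_rpow_of_lt (by linarith) hx
  have I3 : IntegrableOn (fun u => sawtooth (u - α) * u ^ (-s - 1)) (Ioi x) :=
    integrableOn_sawtooth_rpow α hx (by linarith)
  -- split the integrand
  have hsplit_int : ∫ u in Ioi x, ((((⌊u - α⌋ : ℤ) : ℝ) - m) * u ^ (-s - 1))
      = (∫ u in Ioi x, u ^ (-s))
        - ∫ u in Ioi x, ((α + 1/2 + (m : ℝ)) * u ^ (-s - 1)
            + sawtooth (u - α) * u ^ (-s - 1)) := by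
    have I4 : IntegrableOn (fun u : ℝ => (α + 1/2 + (m : ℝ)) * u ^ (-s - 1)
        + sawtooth (u - α) * u ^ (-s - 1)) (Ioi x) :=
      (I2.const_mul (α + 1/2 + (m:ℝ))).add I3
    rw [← integral_sub I1 I4]
    refine setIntegral_congr_fun measurableSet_Ioi fun u hu => ?_
    have hu0 : 0 < u := hx.trans hu
    have hfl : ((⌊u - α⌋ : ℤ) : ℝ) = u - α - sawtooth (u - α) - 1/2 := by
      rw [sawtooth]; ring
    have hpow : u * u ^ (-s - 1) = u ^ (-s) := by
      nth_rewrite 1 [← Real.rpow_one u]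
      rw [← Real.rpow_add hu0]; norm_num
    rw [hfl, ← hpow]; ring
  have hv1 : ∫ u in Ioi x, u ^ (-s) = x ^ (1 - s) / (s - 1) := integral_Ioi_rpow_pos hs hx
  have hv2 : ∫ u in Ioi x, u ^ (-s - 1) = x ^ (-s) / s := by
    rw [integral_Ioi_rpow_of_lt (by linarith) hx, show -s - 1 + 1 = -s by ring, neg_div_neg_eq]
  have hJ : ∫ u in Ioi x, sawtooth (u - α) / u ^ (s + 1)
      = ∫ u in Ioi x, sawtooth (u - α) * u ^ (-s - 1) := by
    refine setIntegral_congr_fun measurableSet_Ioi fun u hu => ?_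
    have hu0 : 0 < u := hx.trans hu
    rw [show -s - 1 = -(s + 1) by ring, Real.rpow_neg hu0.le, div_eq_mul_inv]
  have hv3 : ∫ u in Ioi x, ((α + 1/2 + (m : ℝ)) * u ^ (-s - 1)
        + sawtooth (u - α) * u ^ (-s - 1))
      = (α + 1/2 + (m : ℝ)) * (x ^ (-s) / s)
        + ∫ u in Ioi x, sawtooth (u - α) * u ^ (-s - 1) := by
    rw [integral_add (I2.const_mul (α + 1/2 + (m:ℝ))) I3, integral_const_mul, hv2]
  -- assemble the tail
  have htail : (∑' i : ℕ, (((i + N : ℕ) : ℝ) + α) ^ (-s))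
      = s * ∫ u in Ioi x, ((((⌊u - α⌋ : ℤ) : ℝ) - m) * u ^ (-s - 1)) := by
    calc (∑' i : ℕ, (((i + N : ℕ) : ℝ) + α) ^ (-s))
        = ∑' i : ℕ, (c i) ^ (-s) := tsum_congr fun i => by rw [h2 i]
      _ = ∑' i : ℕ, s * ((c i) ^ (-s) / s) := tsum_congr fun i => by field_simp
      _ = s * ∑' i : ℕ, ((c i) ^ (-s) / s) := tsum_mul_left
      _ = s * ∑' i : ℕ, ∫ u in Ioi x, F i u := by
          rw [tsum_congr fun i => (hFval i).symm]
      _ = s * ∫ u in Ioi x, ∑' i, F i u := by rw [hswap]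
      _ = s * ∫ u in Ioi x, ((((⌊u - α⌋ : ℤ) : ℝ) - m) * u ^ (-s - 1)) := by rw [hint1]
  -- grand finale
  have hfinal := Summable.sum_add_tsum_nat_add (f := fun n : ℕ => ((n : ℝ) + α) ^ (-s)) N hsum
  rw [← hfinal, hP, htail, hsplit_int, hv1, hv3, hJ]
  have hsaw : sawtooth (x - α) = x - α - (m : ℝ) - 1/2 := by
    rw [sawtooth, ← hmdef]
  have hxpow : x ^ (1 - s) = x * x ^ (-s) := by
    rw [show (1:ℝ) - s = 1 + -s by ring, Real.rpow_add hx, Real.rpow_one]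
  rw [hsaw, hxpow]
  have hs1 : s - 1 ≠ 0 := by intro h; linarith [hs]
  field_simp
  ring

lemma sawtoothMeas (α x : ℝ) (w : ℂ) :
    AEStronglyMeasurable (fun u : ℝ => (sawtooth (u - α) : ℂ) * (u : ℂ) ^ w)
      (volume.restrict (Ioi x)) :=
  ((Complex.measurable_ofReal.comp
      (measurable_sawtooth.comp (measurable_id.sub measurable_const))).mul
    ((Complex.measurable_ofReal.comp measurable_id).pow measurable_const)).aestronglyMeasurable

lemma hI_cast (α x : ℝ) (hx : 0 < x) (σ : ℝ) :
    (∫ u in Ioi x, ((sawtooth (u - α) : ℂ) * (u : ℂ) ^ (-(σ:ℂ) - 1)))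
      = ((∫ u in Ioi x, sawtooth (u - α) / u ^ (σ + 1) : ℝ) : ℂ) := by
  rw [show ((∫ u in Ioi x, sawtooth (u - α) / u ^ (σ + 1) : ℝ) : ℂ)
      = ∫ u in Ioi x, ((sawtooth (u - α) / u ^ (σ + 1) : ℝ) : ℂ) from
    (integral_ofReal (𝕜 := ℂ)).symm]
  refine setIntegral_congr_fun measurableSet_Ioi fun u hu => ?_
  have hu0 : 0 < u := hx.trans hu
  rw [show -(σ:ℂ) - 1 = ((-σ - 1 : ℝ) : ℂ) by push_cast; ring,
    ← Complex.ofReal_cpow hu0.le,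
    show sawtooth (u - α) / u ^ (σ + 1) = sawtooth (u - α) * u ^ (-σ - 1) by
      rw [show -σ - 1 = -(σ + 1) by ring, Real.rpow_neg hu0.le, div_eq_mul_inv]]
  push_cast
  ring

lemma hI_diff (α x : ℝ) (hx : 0 < x) {z₀ : ℂ} (hz₀ : 0 < z₀.re) :
    DifferentiableAt ℂ
      (fun z : ℂ => ∫ u in Ioi x, ((sawtooth (u - α) : ℂ) * (u : ℂ) ^ (-z - 1))) z₀ := by
  set δ : ℝ := z₀.re / 2 with hδdef
  have hδ : 0 < δ := half_pos hz₀
  set R : ℝ := z₀.re + δ with hRdef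
  have hR : 0 < R := by positivity
  set bound : ℝ → ℝ := fun u => |Real.log u| * u ^ (-δ - 1) + |Real.log u| * u ^ (-R - 1)
    with hbdef
  have hbound_int : Integrable bound (volume.restrict (Ioi x)) :=
    (integrableOn_log_rpow hx (show -δ - 1 < -1 by linarith)).add
      (integrableOn_log_rpow hx (show -R - 1 < -1 by linarith))
  have key := hasDerivAt_integral_of_dominated_loc_of_deriv_le
    (μ := volume.restrict (Ioi x))
    (F := fun (z : ℂ) (u : ℝ) => (sawtooth (u - α) : ℂ) * (u : ℂ) ^ (-z - 1))
    (F' := fun (z : ℂ) (u : ℝ) =>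
      (sawtooth (u - α) : ℂ) * ((u : ℂ) ^ (-z - 1) * Complex.log u * (-1)))
    (x₀ := z₀) (bound := bound) (Metric.ball_mem_nhds z₀ hδ)
    (Eventually.of_forall fun z => sawtoothMeas α x _)
    (integrableOn_sawtooth_cpow α hx (by
      simp only [Complex.sub_re, Complex.neg_re, Complex.one_re]; linarith))
    (((Complex.measurable_ofReal.comp
        (measurable_sawtooth.comp (measurable_id.sub measurable_const))).mul
      ((((Complex.measurable_ofReal.comp measurable_id).pow measurable_const).mul
        (Complex.measurable_log.comp Complex.measurable_ofReal)).mul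
          measurable_const)).aestronglyMeasurable)
    ?_ hbound_int ?_
  · exact key.2.differentiableAt
  · -- bound
    filter_upwards [ae_restrict_mem measurableSet_Ioi] with u hu
    intro z hz
    have hu0 : 0 < u := hx.trans hu
    have hrez : δ < z.re ∧ z.re < R := by
      have hd := Metric.mem_ball.mp hz
      rw [Complex.dist_eq] at hd
      have h1 : |(z - z₀).re| ≤ ‖z - z₀‖ := Complex.abs_re_le_norm _
      rw [Complex.sub_re] at h1
      have h2 : |z.re - z₀.re| < δ := lt_of_le_of_lt h1 hd
      rw [abs_lt] at h2
      constructor <;> [linarith [h2.1]; linarith [h2.2]]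
    have hcase : u ^ (-z.re - 1) ≤ u ^ (-δ - 1) + u ^ (-R - 1) := by
      rcases le_or_gt 1 u with h1 | h1
      · have h3 := Real.rpow_le_rpow_of_exponent_le h1
          (show -z.re - 1 ≤ -δ - 1 by linarith [hrez.1])
        have h4 : (0:ℝ) ≤ u ^ (-R - 1) := Real.rpow_nonneg hu0.le _
        linarith
      · have h3 := Real.rpow_le_rpow_of_exponent_ge hu0 h1.le
          (show -R - 1 ≤ -z.re - 1 by linarith [hrez.2])
        have h4 : (0:ℝ) ≤ u ^ (-δ - 1) := Real.rpow_nonneg hu0.le _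
        linarith
    have hnorm : ‖(sawtooth (u - α) : ℂ) * ((u : ℂ) ^ (-z - 1) * Complex.log u * (-1))‖
        = |sawtooth (u - α)| * (u ^ (-z.re - 1) * |Real.log u|) := by
      rw [norm_mul, norm_mul, norm_mul, norm_neg, norm_one, mul_one,
        Complex.norm_real, Real.norm_eq_abs, ← Complex.ofReal_log hu0.le,
        Complex.norm_real, Real.norm_eq_abs,
        Complex.norm_cpow_eq_rpow_re_of_pos hu0]
      congr 2 <;> simp [Complex.sub_re, Complex.neg_re]
    rw [hnorm, hbdef]
    have h5 : |sawtooth (u - α)| * (u ^ (-z.re - 1) * |Real.log u|)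
        ≤ 1 * (u ^ (-z.re - 1) * |Real.log u|) :=
      mul_le_mul_of_nonneg_right ((sawtooth_abs_le _).trans (by norm_num))
        (mul_nonneg (Real.rpow_nonneg hu0.le _) (abs_nonneg _))
    have h6 : u ^ (-z.re - 1) * |Real.log u|
        ≤ (u ^ (-δ - 1) + u ^ (-R - 1)) * |Real.log u| :=
      mul_le_mul_of_nonneg_right hcase (abs_nonneg _)
    calc |sawtooth (u - α)| * (u ^ (-z.re - 1) * |Real.log u|)
        ≤ u ^ (-z.re - 1) * |Real.log u| := by linarith
      _ ≤ (u ^ (-δ - 1) + u ^ (-R - 1)) * |Real.log u| := h6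
      _ = |Real.log u| * u ^ (-δ - 1) + |Real.log u| * u ^ (-R - 1) := by ring
  · -- differentiability
    filter_upwards [ae_restrict_mem measurableSet_Ioi] with u hu
    intro z hz
    have hu0 : 0 < u := hx.trans hu
    have hune : (u : ℂ) ≠ 0 := Complex.ofReal_ne_zero.mpr hu0.ne'
    have hd : HasDerivAt (fun z : ℂ => -z - 1) (-1) z := (hasDerivAt_id z).neg.sub_const 1
    exact (hd.const_cpow (Or.inl hune)).const_mul _

end HurwitzAFEAux

/-- Exact AFE for the Hurwitz zeta function `ζ(s,α)` for real `s > 0`, `s ≠ 1`. -/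
theorem hurwitzZeta_real_afe (s : ℝ) (hs : 0 < s) (hs1 : s ≠ 1)
    (α : ℝ) (hα0 : 0 < α) (hα1 : α ≤ 1) (x : ℝ) (hx : 0 < x) :
    HurwitzZeta.hurwitzZeta (α : UnitAddCircle) s =
      ((∑ n ∈ Icc (0 : ℤ) ⌊x - α⌋, ((n : ℝ) + α) ^ (-s) : ℝ) : ℂ)
      + ((x ^ (1 - s) / (s - 1) : ℝ) : ℂ)
      + ((sawtooth (x - α) * x ^ (-s) : ℝ) : ℂ)
      - ((s * ∫ u in Set.Ioi x, sawtooth (u - α) / u ^ (s + 1) : ℝ) : ℂ) := by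
  have hαIcc : α ∈ Set.Icc (0:ℝ) 1 := ⟨hα0.le, hα1⟩
  set m : ℤ := ⌊x - α⌋ with hmdef
  set I : ℂ → ℂ := fun z => ∫ u in Set.Ioi x, ((sawtooth (u - α) : ℂ) * (u : ℂ) ^ (-z - 1))
    with hIdef
  set f : ℂ → ℂ := fun z =>
    (z - 1) * (HurwitzZeta.hurwitzZeta (α : UnitAddCircle) z
      - 1 / (z - 1) / Complex.Gammaℝ z) + 1 / Complex.Gammaℝ z with hfdef
  set g : ℂ → ℂ := fun z =>
    (z - 1) * ((∑ n ∈ Finset.Icc (0:ℤ) m, (((n : ℝ) + α : ℝ) : ℂ) ^ (-z))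
      + (sawtooth (x - α) : ℂ) * (x : ℂ) ^ (-z) - z * I z) + (x : ℂ) ^ (1 - z) with hgdef
  set U : Set ℂ := {z : ℂ | 0 < z.re} with hUdef
  -- cast of g at real points
  have gcast : ∀ σ : ℝ, σ ≠ 1 → g (σ:ℂ) = ((σ : ℂ) - 1) *
      (((∑ n ∈ Finset.Icc (0:ℤ) m, ((n : ℝ) + α) ^ (-σ) + x ^ (1 - σ) / (σ - 1)
        + sawtooth (x - α) * x ^ (-σ)
        - σ * ∫ u in Set.Ioi x, sawtooth (u - α) / u ^ (σ + 1) : ℝ)) : ℂ) := by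
    intro σ hσ
    have hσ1 : ((σ:ℂ) - 1) ≠ 0 := sub_ne_zero.mpr (Complex.ofReal_ne_one.mpr hσ)
    have hsum_cast : ∀ n ∈ Finset.Icc (0:ℤ) m, (((n : ℝ) + α : ℝ) : ℂ) ^ (-(σ:ℂ))
        = ((((n:ℝ) + α) ^ (-σ) : ℝ) : ℂ) := by
      intro n hn
      have hn0 : (0:ℝ) ≤ (n:ℝ) + α := by
        have h1 := (Finset.mem_Icc.mp hn).1
        have h2 : (0:ℝ) ≤ (n:ℝ) := by exact_mod_cast h1
        linarith
      rw [Complex.ofReal_cpow hn0, Complex.ofReal_neg]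
    have hx1 : (x:ℂ) ^ (1 - (σ:ℂ)) = ((x ^ (1 - σ) : ℝ) : ℂ) := by
      rw [Complex.ofReal_cpow hx.le, Complex.ofReal_sub, Complex.ofReal_one]
    have hxneg : (x:ℂ) ^ (-(σ:ℂ)) = ((x ^ (-σ) : ℝ) : ℂ) := by
      rw [Complex.ofReal_cpow hx.le, Complex.ofReal_neg]
    rw [hgdef]
    simp only []
    have hIc : I (σ:ℂ) = ((∫ u in Set.Ioi x, sawtooth (u - α) / u ^ (σ + 1) : ℝ) : ℂ) :=
      hI_cast α x hx σ
    rw [hIc, Finset.sum_congr rfl hsum_cast, hx1, hxneg]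
    push_cast
    field_simp
    ring
  -- pole removal form of f
  have fpole : ∀ z : ℂ, z ≠ 1 →
      f z = (z - 1) * HurwitzZeta.hurwitzZeta (α : UnitAddCircle) z := by
    intro z hz
    have h1 : (z - 1) ≠ 0 := sub_ne_zero.mpr hz
    have hG : (z - 1) * (1 / (z - 1) / Complex.Gammaℝ z) = 1 / Complex.Gammaℝ z := by
      rw [div_div, mul_one_div, ← div_div, div_self h1]
    rw [hfdef]
    simp only []
    rw [mul_sub, hG]
    ring
  -- equality of f and g at real points > 1
  have hfg_real : ∀ σ : ℝ, 1 < σ → f (σ:ℂ) = g (σ:ℂ) := by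
    intro σ hσ
    have hσ1 : σ ≠ 1 := ne_of_gt hσ
    have hre : 1 < (Complex.ofReal σ).re := by rwa [Complex.ofReal_re]
    have hHS := HurwitzZeta.hasSum_hurwitzZeta_of_one_lt_re hαIcc hre
    have hterm : ∀ n : ℕ, (1 / ((n : ℂ) + (α : ℂ)) ^ (σ:ℂ))
        = ((((n:ℝ) + α) ^ (-σ) : ℝ) : ℂ) := by
      intro n
      have hn0 : (0:ℝ) < (n:ℝ) + α := by positivity
      rw [show ((n:ℂ) + (α:ℂ)) = (((n:ℝ) + α : ℝ) : ℂ) by push_cast; ring,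
        Real.rpow_neg hn0.le, Complex.ofReal_inv, ← Complex.ofReal_cpow hn0.le, one_div]
    have hHS2 : HasSum (fun n : ℕ => ((((n:ℝ) + α) ^ (-σ) : ℝ) : ℂ))
        (HurwitzZeta.hurwitzZeta (α : UnitAddCircle) σ) := by
      exact (funext hterm : (fun n : ℕ => 1 / ((n : ℂ) + (α : ℂ)) ^ (σ:ℂ)) = _) ▸ hHS
    have hsumR : Summable (fun n : ℕ => ((n:ℝ) + α) ^ (-σ)) :=
      Complex.summable_ofReal.mp hHS2.summable
    have hzeta : HurwitzZeta.hurwitzZeta (α : UnitAddCircle) σ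
        = (((∑' n : ℕ, ((n:ℝ) + α) ^ (-σ)) : ℝ) : ℂ) := by
      rw [Complex.ofReal_tsum]
      exact hHS2.tsum_eq.symm
    rw [fpole _ (Complex.ofReal_ne_one.mpr hσ1), gcast σ hσ1, hzeta,
      tail_repr hσ hα0 hα1 hx hsumR]
  -- differentiability of f on U
  have hfd : DifferentiableOn ℂ f U := by
    intro z hz
    have hzre : 0 < z.re := hz
    have hGd : DifferentiableAt ℂ (fun w : ℂ => 1 / Complex.Gammaℝ w) z := by
      simp only [one_div]
      exact Complex.differentiable_Gammaℝ_inv.differentiableAt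
    by_cases h1 : z = 1
    · subst h1
      exact (((differentiableAt_id.sub_const 1).mul
        (HurwitzZeta.differentiableAt_hurwitzZeta_sub_one_div _)).add hGd).differentiableWithinAt
    · have hrw : (fun w : ℂ => 1 / (w - 1) / Complex.Gammaℝ w)
          = fun w : ℂ => (1 / (w - 1)) * (Complex.Gammaℝ w)⁻¹ := by
        funext w; rw [div_eq_mul_inv]
      have hq : DifferentiableAt ℂ (fun w : ℂ => 1 / (w - 1)) z := by
        have ha : DifferentiableAt ℂ (fun _ : ℂ => (1:ℂ)) z := differentiableAt_const 1
        have hb : DifferentiableAt ℂ (fun w : ℂ => w - 1) z := differentiableAt_id.sub_const 1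
        exact ha.div hb (sub_ne_zero.mpr h1)
      have hd2 : DifferentiableAt ℂ (fun w : ℂ => 1 / (w - 1) / Complex.Gammaℝ w) z := by
        rw [hrw]
        exact hq.mul Complex.differentiable_Gammaℝ_inv.differentiableAt
      exact (((differentiableAt_id.sub_const 1).mul
        ((HurwitzZeta.differentiableAt_hurwitzZeta _ h1).sub hd2)).add hGd).differentiableWithinAt
  -- differentiability of g on U
  have hgd : DifferentiableOn ℂ g U := by
    intro z hz
    have hzre : 0 < z.re := hz
    have hsd : DifferentiableAt ℂ (fun w : ℂ =>
        ∑ n ∈ Finset.Icc (0:ℤ) m, (((n : ℝ) + α : ℝ) : ℂ) ^ (-w)) z := by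
      refine DifferentiableAt.fun_sum fun n hn => ?_
      have hb : (((n : ℝ) + α : ℝ) : ℂ) ≠ 0 := by
        have h1 := (Finset.mem_Icc.mp hn).1
        have h2 : (0:ℝ) ≤ (n:ℝ) := by exact_mod_cast h1
        exact Complex.ofReal_ne_zero.mpr (by linarith)
      exact differentiableAt_id.neg.const_cpow (Or.inl hb)
    have hxne : (x : ℂ) ≠ 0 := Complex.ofReal_ne_zero.mpr hx.ne'
    have hd2 : DifferentiableAt ℂ (fun w : ℂ => (sawtooth (x - α) : ℂ) * (x:ℂ) ^ (-w)) z :=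
      (differentiableAt_id.neg.const_cpow (Or.inl hxne)).const_mul _
    have hd3 : DifferentiableAt ℂ (fun w : ℂ => w * I w) z :=
      differentiableAt_id.mul (hI_diff α x hx hzre)
    have hd4 : DifferentiableAt ℂ (fun w : ℂ => (x:ℂ) ^ (1 - w)) z :=
      ((differentiableAt_const 1).sub differentiableAt_id).const_cpow (Or.inl hxne)
    exact (((differentiableAt_id.sub_const 1).mul
      ((hsd.add hd2).sub hd3)).add hd4).differentiableWithinAt
  -- identity theorem
  have hUo : IsOpen U := isOpen_lt continuous_const Complex.continuous_re
  have hUp : IsPreconnected U := (convex_halfSpace_re_gt 0).isPreconnected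
  have h2U : (2:ℂ) ∈ U := by
    simp only [hUdef, Set.mem_setOf_eq]
    norm_num
  have hfreq : ∃ᶠ z in nhdsWithin (2:ℂ) {(2:ℂ)}ᶜ, f z = g z := by
    have h0 : Filter.Tendsto (fun n : ℕ => (2 + 1/((n:ℝ)+1) : ℝ)) Filter.atTop (nhds 2) := by
      have h1 := tendsto_one_div_add_atTop_nhds_zero_nat (𝕜 := ℝ)
      simpa using tendsto_const_nhds.add h1
    have hseq : Filter.Tendsto (fun n : ℕ => ((2 + 1/((n:ℝ)+1) : ℝ) : ℂ)) Filter.atTop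
        (nhdsWithin (2:ℂ) {(2:ℂ)}ᶜ) := by
      refine tendsto_nhdsWithin_of_tendsto_nhds_of_eventually_within _ ?_ ?_
      · have h2 : Filter.Tendsto (fun n : ℕ => ((2 + 1/((n:ℝ)+1) : ℝ) : ℂ)) Filter.atTop (nhds ((2:ℝ):ℂ)) :=
          (Complex.continuous_ofReal.tendsto 2).comp h0
        rw [show ((2:ℝ):ℂ) = (2:ℂ) by norm_num] at h2
        exact h2
      · refine Filter.Eventually.of_forall fun n => ?_
        simp only [Set.mem_compl_iff, Set.mem_singleton_iff]
        intro h
        have h3 : (2 + 1/((n:ℝ)+1) : ℝ) = 2 := by exact_mod_cast h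
        have h4 : (0:ℝ) < 1/((n:ℝ)+1) := by positivity
        linarith
    exact hseq.frequently (Filter.Frequently.of_forall fun n =>
      hfg_real _ (by
        have h4 : (0:ℝ) < 1/((n:ℝ)+1) := by positivity
        linarith))
  have heq : Set.EqOn f g U :=
    AnalyticOnNhd.eqOn_of_preconnected_of_frequently_eq
      (hfd.analyticOnNhd hUo) (hgd.analyticOnNhd hUo) hUp h2U hfreq
  have hsU : (s:ℂ) ∈ U := by
    simp only [hUdef, Set.mem_setOf_eq, Complex.ofReal_re]
    exact hs
  have hfg := heq hsU
  rw [fpole _ (Complex.ofReal_ne_one.mpr hs1), gcast s hs1] at hfg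
  have hcancel := mul_left_cancel₀
    (sub_ne_zero.mpr (Complex.ofReal_ne_one.mpr hs1)) hfg
  rw [hcancel]
  push_cast
  ring
end
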